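/- arXiv:1604.05753 — 15 statements merged into one kernel-verified Lean document; each statement's English description precedes it below -/
import Mathlib

section
/- Let d, k, m, t be positive integers and let x ∈ B_{d,k}. Suppose h_1, …, h_t : [d] → [m] are random hash functions drawn independently, each from a pairwise independent distribution, and suppose m ≥ e·k (where e is Euler's number). Then for every index i ∈ [d], the probability that DecMin(Sk_{h_{1:t}}(x), i) ≠ x_i is at most e^{−t}. -/
open MeasureTheory Finset
open scoped ENNReal NNReal BigOperators

/-- The count-min style sketch of `x` under hash function `h`:
`(Sk h x) l = ∑_{i : h i = l} x i`. -/
noncomputable def Sk {d m : ℕ} (h : Fin d → Fin m) (x : Fin d → ℝ) : Fin m → ℝ :=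
  fun l => ∑ i ∈ Finset.univ.filter (fun i => h i = l), x i

/-- `Dec (y, i; h) = y (h i)`. -/
def Dec {d m : ℕ} (y : Fin m → ℝ) (i : Fin d) (h : Fin d → Fin m) : ℝ := y (h i)

/-- `DecMin` of the sketch matrix with columns `Sk (h j) x`:
the minimum over `j` of `Dec (Sk (h j) x, i; h j)`. -/
noncomputable def DecMin {d m t : ℕ} (h : Fin t → Fin d → Fin m) (x : Fin d → ℝ)
    (i : Fin d) : ℝ :=
  ⨅ j : Fin t, Dec (Sk (h j) x) i (h j)

/-- A distribution over hash functions `[d] → [m]` is pairwise independent if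
for all `i ≠ i'` and all buckets `a, b`, `Pr[h i = a ∧ h i' = b] = 1/m²`. -/
def PairwiseIndepHash {d m : ℕ} (μ : Measure (Fin d → Fin m)) : Prop :=
  ∀ i i' : Fin d, i ≠ i' → ∀ a b : Fin m,
    μ {h | h i = a ∧ h i' = b} = 1 / (m : ℝ≥0∞) ^ 2

/-- For `x ∈ B_{d,k}` and `t` independent pairwise-independent
hashes into `m ≥ e·k` buckets, `Pr[DecMin(Sk_{h_{1:t}}(x), i) ≠ x i] ≤ e^{-t}`. -/
theorem decMin_error_le_exp_neg_t
    (d k m t : ℕ) (hd : 0 < d) (hk : 0 < k) (hm0 : 0 < m) (ht : 0 < t)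
    (x : Fin d → ℝ)
    (hxbin : ∀ i, x i = 0 ∨ x i = 1)
    (hxsparse : {i | x i ≠ 0}.ncard ≤ k)
    (μ : Fin t → Measure (Fin d → Fin m))
    (hprob : ∀ j, IsProbabilityMeasure (μ j))
    (hpair : ∀ j, PairwiseIndepHash (μ j))
    (hm : Real.exp 1 * (k : ℝ) ≤ (m : ℝ))
    (i : Fin d) :
    Measure.pi μ {H : Fin t → Fin d → Fin m | DecMin H x i ≠ x i}
      ≤ ENNReal.ofReal (Real.exp (-(t : ℝ))) := by
  haveI : ∀ j, SigmaFinite (μ j) := fun j => by haveI := hprob j; infer_instance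
  have hx0 : ∀ i', 0 ≤ x i' := fun i' => by rcases hxbin i' with h | h <;> simp [h]
  have hmne : (m : ℝ≥0∞) ≠ 0 := by exact_mod_cast hm0.ne'
  have hmtop : (m : ℝ≥0∞) ≠ ⊤ := ENNReal.natCast_ne_top m
  set E : Set (Fin d → Fin m) := {h | Dec (Sk h x) i h ≠ x i} with hE
  -- Dec ≥ x i always
  have hDecge : ∀ (h : Fin d → Fin m), x i ≤ Dec (Sk h x) i h := by
    intro h
    have hmem : i ∈ Finset.univ.filter (fun i' => h i' = h i) := by simp
    exact Finset.single_le_sum (fun i' _ => hx0 i') hmem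
  -- bad set ⊆ product of per-hash bad events
  haveI : Nonempty (Fin t) := ⟨⟨0, ht⟩⟩
  have hsubset : {H : Fin t → Fin d → Fin m | DecMin H x i ≠ x i}
      ⊆ Set.univ.pi (fun _ : Fin t => E) := by
    intro H hH j _
    simp only [hE, Set.mem_setOf_eq]
    intro hj
    apply hH
    have hle : DecMin H x i ≤ x i := by
      rw [← hj]; exact ciInf_le (Finite.bddBelow_range _) j
    have hge : x i ≤ DecMin H x i := le_ciInf fun j' => hDecge (H j')
    exact le_antisymm hle hge
  -- if Dec ≠ x i then some other nonzero coordinate collides with i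
  have hcol : ∀ (h : Fin d → Fin m), h ∈ E → ∃ i', i' ≠ i ∧ x i' ≠ 0 ∧ h i' = h i := by
    intro h hh
    by_contra hcon
    push_neg at hcon
    apply hh
    show (∑ i' ∈ Finset.univ.filter (fun i' => h i' = h i), x i') = x i
    apply Finset.sum_eq_single_of_mem i (by simp)
    intro b hb hbi
    simp only [Finset.mem_filter] at hb
    by_contra hxb
    exact hcon b hbi hxb hb.2
  -- collision probability bound
  have hcollide : ∀ j (i' : Fin d), i' ≠ i → μ j {h : Fin d → Fin m | h i' = h i}
      ≤ 1 / (m : ℝ≥0∞) := by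
    intro j i' hne
    have hsub : {h : Fin d → Fin m | h i' = h i}
        ⊆ ⋃ a : Fin m, {h : Fin d → Fin m | h i = a ∧ h i' = a} := by
      intro h hh
      exact Set.mem_iUnion.2 ⟨h i, rfl, hh⟩
    calc μ j {h : Fin d → Fin m | h i' = h i}
        ≤ ∑' a : Fin m, μ j {h : Fin d → Fin m | h i = a ∧ h i' = a} :=
          le_trans (measure_mono hsub) (measure_iUnion_le _)
      _ = ∑ a : Fin m, μ j {h : Fin d → Fin m | h i = a ∧ h i' = a} := tsum_fintype _
      _ = ∑ _a : Fin m, 1 / (m : ℝ≥0∞) ^ 2 :=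
          Finset.sum_congr rfl fun a _ => hpair j i i' (Ne.symm hne) a a
      _ = (m : ℝ≥0∞) * (1 / (m : ℝ≥0∞) ^ 2) := by
          rw [Finset.sum_const, Finset.card_univ, Fintype.card_fin, nsmul_eq_mul]
      _ = 1 / (m : ℝ≥0∞) := by
          rw [pow_two, one_div, one_div,
            ENNReal.mul_inv (Or.inl hmne) (Or.inl hmtop), ← mul_assoc,
            ENNReal.mul_inv_cancel hmne hmtop, one_mul]
  -- real-number bound k/m ≤ e⁻¹
  have hkm : (k : ℝ) / (m : ℝ) ≤ Real.exp (-1) := by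
    have he : (0 : ℝ) < Real.exp 1 := Real.exp_pos 1
    rw [Real.exp_neg, inv_eq_one_div, div_le_div_iff₀ (by positivity) he]
    nlinarith [hm]
  -- per-hash bad event probability ≤ e⁻¹
  have hEbound : ∀ j, μ j E ≤ ENNReal.ofReal (Real.exp (-1)) := by
    intro j
    set S : Finset (Fin d) := Finset.univ.filter (fun i' => i' ≠ i ∧ x i' ≠ 0) with hS
    have hsub : E ⊆ ⋃ i' ∈ S, {h : Fin d → Fin m | h i' = h i} := by
      intro h hh
      obtain ⟨i', h1, h2, h3⟩ := hcol h hh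
      have hmemS : i' ∈ S := by simp [hS, h1, h2]
      exact Set.mem_biUnion hmemS h3
    have hScard : S.card ≤ k := by
      have h1 : S ⊆ Finset.univ.filter (fun i' => x i' ≠ 0) := by
        intro a ha
        simp only [hS, Finset.mem_filter] at ha ⊢
        exact ⟨ha.1, ha.2.2⟩
      have h2 : (Finset.univ.filter (fun i' => x i' ≠ 0)).card = {i' | x i' ≠ 0}.ncard := by
        rw [Set.ncard_eq_toFinset_card']
        congr 1
        ext a
        simp
      exact le_trans (Finset.card_le_card h1) (h2 ▸ hxsparse)
    calc μ j E ≤ ∑ i' ∈ S, μ j {h : Fin d → Fin m | h i' = h i} :=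
          le_trans (measure_mono hsub) (measure_biUnion_finset_le S _)
      _ ≤ ∑ i' ∈ S, 1 / (m : ℝ≥0∞) :=
          Finset.sum_le_sum fun i' hi' =>
            hcollide j i' (Finset.mem_filter.1 hi').2.1
      _ = (S.card : ℝ≥0∞) * (1 / (m : ℝ≥0∞)) := by rw [Finset.sum_const, nsmul_eq_mul]
      _ ≤ (k : ℝ≥0∞) * (1 / (m : ℝ≥0∞)) := by gcongr <;> exact_mod_cast hScard
      _ = ENNReal.ofReal ((k : ℝ) / (m : ℝ)) := by
          rw [ENNReal.ofReal_div_of_pos (by exact_mod_cast hm0),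
            ENNReal.ofReal_natCast, ENNReal.ofReal_natCast, mul_one_div]
      _ ≤ ENNReal.ofReal (Real.exp (-1)) := ENNReal.ofReal_le_ofReal hkm
  calc Measure.pi μ {H : Fin t → Fin d → Fin m | DecMin H x i ≠ x i}
      ≤ Measure.pi μ (Set.univ.pi fun _ : Fin t => E) := measure_mono hsubset
    _ = ∏ j : Fin t, μ j E := Measure.pi_pi μ _
    _ ≤ ∏ _j : Fin t, ENNReal.ofReal (Real.exp (-1)) :=
        Finset.prod_le_prod' fun j _ => hEbound j
    _ = ENNReal.ofReal (Real.exp (-1)) ^ t := by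
        rw [Finset.prod_const, Finset.card_univ, Fintype.card_fin]
    _ = ENNReal.ofReal (Real.exp (-1) ^ t) :=
        (ENNReal.ofReal_pow (Real.exp_pos _).le t).symm
    _ = ENNReal.ofReal (Real.exp (-(t : ℝ))) := by
        rw [← Real.exp_nat_mul]; norm_num
end

section
/- Let d, k, m, t be positive integers and let x ∈ B_{d,k}. Suppose h_1, …, h_t : [d] → [m] are random hash functions drawn independently, each from a pairwise independent distribution, and suppose m ≥ e·k. Then for every index i ∈ [d], the probability that DecAnd(BSk_{h_{1:t}}(x), i) ≠ x_i is at most e^{−t}. -/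
open MeasureTheory Finset
open scoped ENNReal NNReal BigOperators

/-- The Boolean sketch of `x ∈ {0,1}^d` under hash `h`:
`(BSk h x) l = OR_{i : h i = l} x i`. -/
def BSk {d m : ℕ} (h : Fin d → Fin m) (x : Fin d → Bool) : Fin m → Bool :=
  fun l => decide (∃ i, h i = l ∧ x i = true)

/-- `DecAnd` of the Boolean sketch matrix: the AND over `j ∈ [t]` of
the decoded bits `(BSk (h j) x) ((h j) i)`. -/
def DecAnd {d m t : ℕ} (h : Fin t → Fin d → Fin m) (x : Fin d → Bool)
    (i : Fin d) : Bool :=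
  decide (∀ j : Fin t, BSk (h j) x ((h j) i) = true)

theorem decAnd_error_le_exp_neg_t'
    (d k m t : ℕ) (hd : 0 < d) (hk : 0 < k) (hm0 : 0 < m) (ht : 0 < t)
    (x : Fin d → Bool)
    (hxsparse : {i | x i = true}.ncard ≤ k)
    (μ : Fin t → Measure (Fin d → Fin m))
    (hprob : ∀ j, IsProbabilityMeasure (μ j))
    (hpair : ∀ j, ∀ i i' : Fin d, i ≠ i' → ∀ a b : Fin m,
      μ j {h | h i = a ∧ h i' = b} = 1 / (m : ℝ≥0∞) ^ 2)
    (hm : Real.exp 1 * (k : ℝ) ≤ (m : ℝ))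
    (i : Fin d) :
    Measure.pi μ {H : Fin t → Fin d → Fin m | (decide (∀ j : Fin t, (decide (∃ i0, H j i0 = H j i ∧ x i0 = true)) = true)) ≠ x i}
      ≤ ENNReal.ofReal (Real.exp (-(t : ℝ))) := by
  haveI : ∀ j, SigmaFinite (μ j) := fun j => by have := hprob j; infer_instance
  by_cases hxi : x i = true
  · have hempty : {H : Fin t → Fin d → Fin m | (decide (∀ j : Fin t, (decide (∃ i0, H j i0 = H j i ∧ x i0 = true)) = true)) ≠ x i} = ∅ := by
      ext H
      simp only [Set.mem_setOf_eq, Set.mem_empty_iff_false, iff_false, ne_eq, not_not, hxi,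
        decide_eq_true_eq]
      intro j
      exact ⟨i, rfl, hxi⟩
    rw [hempty]
    simp
  · have hxif : x i = false := by simpa using hxi
    set A : Fin t → Set (Fin d → Fin m) :=
      fun _ => {h | ∃ i0, h i0 = h i ∧ x i0 = true} with hA
    have hset : {H : Fin t → Fin d → Fin m | (decide (∀ j : Fin t, (decide (∃ i0, H j i0 = H j i ∧ x i0 = true)) = true)) ≠ x i} = Set.univ.pi A := by
      ext H
      simp [hxif, Set.mem_pi, hA]
    rw [hset, Measure.pi_pi]
    -- per-coordinate bound
    set S : Finset (Fin d) := Finset.univ.filter (fun i0 => x i0 = true) with hS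
    have hScard : (S.card : ℝ≥0∞) ≤ (k : ℝ≥0∞) := by
      have h1 : {i0 | x i0 = true} = (S : Set (Fin d)) := by ext i0; simp [hS]
      have := hxsparse
      rw [h1, Set.ncard_coe_finset] at this
      exact_mod_cast this
    have hone : ∀ j : Fin t, ∀ i0 : Fin d, i0 ≠ i →
        μ j {h : Fin d → Fin m | h i0 = h i} = 1 / (m : ℝ≥0∞) := by
      intro j i0 hne
      have hU : {h : Fin d → Fin m | h i0 = h i}
          = ⋃ a : Fin m, {h | h i0 = a ∧ h i = a} := by
        ext h
        simp only [Set.mem_setOf_eq, Set.mem_iUnion]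
        constructor
        · intro he; exact ⟨h i, he, rfl⟩
        · rintro ⟨a, h1, h2⟩; rw [h1, h2]
      rw [hU, measure_iUnion]
      · have : ∀ a : Fin m, μ j {h : Fin d → Fin m | h i0 = a ∧ h i = a}
            = 1 / (m : ℝ≥0∞) ^ 2 := fun a => hpair j i0 i hne a a
        rw [tsum_eq_sum (s := Finset.univ) (by simp)]
        simp only [this]
        rw [Finset.sum_const, Finset.card_univ, Fintype.card_fin, nsmul_eq_mul]
        have hmne : (m : ℝ≥0∞) ≠ 0 := by exact_mod_cast hm0.ne'
        have hmtop : (m : ℝ≥0∞) ≠ ⊤ := ENNReal.natCast_ne_top m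
        rw [one_div, one_div, pow_two, ENNReal.mul_inv (Or.inl hmne) (Or.inl hmtop),
          ← mul_assoc, ENNReal.mul_inv_cancel hmne hmtop, one_mul]
      · intro a b hab
        refine Set.disjoint_left.mpr ?_
        rintro h ⟨h1, _⟩ ⟨h2, _⟩
        exact hab (h1 ▸ h2 ▸ rfl)
      · intro a
        exact (Set.toFinite _).measurableSet
    have hbound : ∀ j : Fin t, μ j (A j) ≤ ENNReal.ofReal (Real.exp (-1)) := by
      intro j
      have hsub : A j ⊆ ⋃ i0 ∈ S, {h : Fin d → Fin m | h i0 = h i} := by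
        rintro h ⟨i0, he, hx0⟩
        exact Set.mem_biUnion (Finset.mem_filter.mpr ⟨Finset.mem_univ i0, hx0⟩) he
      calc μ j (A j) ≤ ∑ i0 ∈ S, μ j {h : Fin d → Fin m | h i0 = h i} :=
              (measure_mono hsub).trans (measure_biUnion_finset_le S _)
        _ = S.card * (1 / (m : ℝ≥0∞)) := by
              rw [Finset.sum_congr rfl (fun i0 hi0 => hone j i0 ?_), Finset.sum_const,
                nsmul_eq_mul]
              intro he
              rw [he] at hi0
              simp [hS, hxif] at hi0
        _ ≤ (k : ℝ≥0∞) * (1 / (m : ℝ≥0∞)) := by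
              exact mul_le_mul_left hScard _
        _ ≤ ENNReal.ofReal (Real.exp (-1)) := by
              have hmpos : (0 : ℝ) < m := by exact_mod_cast hm0
              have hr : (k : ℝ) / m ≤ Real.exp (-1) := by
                rw [Real.exp_neg, inv_eq_one_div, div_le_div_iff₀ hmpos (Real.exp_pos 1)]
                nlinarith [hm]
              calc (k : ℝ≥0∞) * (1 / (m : ℝ≥0∞)) = ENNReal.ofReal ((k : ℝ) / m) := by
                    rw [ENNReal.ofReal_div_of_pos hmpos, ENNReal.ofReal_natCast,
                      ENNReal.ofReal_natCast, mul_one_div]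
                _ ≤ ENNReal.ofReal (Real.exp (-1)) := ENNReal.ofReal_le_ofReal hr
    calc ∏ j : Fin t, μ j (A j)
        ≤ ∏ _j : Fin t, ENNReal.ofReal (Real.exp (-1)) :=
          Finset.prod_le_prod' (fun j _ => hbound j)
      _ = ENNReal.ofReal (Real.exp (-1)) ^ t := by
          rw [Finset.prod_const, Finset.card_univ, Fintype.card_fin]
      _ = ENNReal.ofReal (Real.exp (-1) ^ t) :=
          (ENNReal.ofReal_pow (Real.exp_nonneg _) t).symm
      _ = ENNReal.ofReal (Real.exp (-(t : ℝ))) := by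
          rw [← Real.exp_nat_mul, mul_neg_one]

/-- For `x ∈ B_{d,k}` and `t` independent pairwise-independent
hashes into `m ≥ e·k` buckets, `Pr[DecAnd(BSk_{h_{1:t}}(x), i) ≠ x i] ≤ e^{-t}`. -/
theorem decAnd_error_le_exp_neg_t
    (d k m t : ℕ) (hd : 0 < d) (hk : 0 < k) (hm0 : 0 < m) (ht : 0 < t)
    (x : Fin d → Bool)
    (hxsparse : {i | x i = true}.ncard ≤ k)
    (μ : Fin t → Measure (Fin d → Fin m))
    (hprob : ∀ j, IsProbabilityMeasure (μ j))
    (hpair : ∀ j, PairwiseIndepHash (μ j))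
    (hm : Real.exp 1 * (k : ℝ) ≤ (m : ℝ))
    (i : Fin d) :
    Measure.pi μ {H : Fin t → Fin d → Fin m | DecAnd H x i ≠ x i}
      ≤ ENNReal.ofReal (Real.exp (-(t : ℝ))) := by
  exact decAnd_error_le_exp_neg_t' d k m t hd hk hm0 ht x hxsparse μ hprob hpair hm i
end

section
/- Let d, k, m be positive integers, let x ∈ B_{d,k}, and let h : [d] → [m] be a random hash function drawn from a pairwise independent distribution. Then for every index i ∈ [d], the probability that Dec(Sk_h(x), i; h) ≠ x_i is at most k/m. -/
open MeasureTheory Finset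
open scoped ENNReal NNReal BigOperators

/-- For `x ∈ B_{d,k}` and a single pairwise-independent hash
into `m` buckets, `Pr[Dec(Sk_h(x), i; h) ≠ x i] ≤ k/m`. -/
theorem dec_error_le_k_div_m
    (d k m : ℕ) (hd : 0 < d) (hk : 0 < k) (hm0 : 0 < m)
    (x : Fin d → ℝ)
    (hxbin : ∀ i, x i = 0 ∨ x i = 1)
    (hxsparse : {i | x i ≠ 0}.ncard ≤ k)
    (μ : Measure (Fin d → Fin m))
    (hprob : IsProbabilityMeasure μ)
    (hpair : PairwiseIndepHash μ)
    (i : Fin d) :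
    μ {h : Fin d → Fin m | Dec (Sk h x) i h ≠ x i} ≤ (k : ℝ≥0∞) / (m : ℝ≥0∞) := by
  classical
  have hm : (m : ℝ≥0∞) ≠ 0 := by
    simpa using hm0.ne'
  have hm' : (m : ℝ≥0∞) ≠ ⊤ := by simp
  set S : Finset (Fin d) := Finset.univ.filter (fun j => x j ≠ 0 ∧ j ≠ i) with hS
  -- The error event is contained in a union of collision events
  have hsub : {h : Fin d → Fin m | Dec (Sk h x) i h ≠ x i} ⊆
      ⋃ j ∈ S, {h : Fin d → Fin m | h j = h i} := by
    intro h hh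
    by_contra hcon
    simp only [Set.mem_iUnion, Set.mem_setOf_eq, not_exists] at hcon
    apply hh
    show Sk h x (h i) = x i
    unfold Sk
    rw [Finset.sum_eq_single i]
    · intro j hj hji
      by_contra hxj
      exact hcon j (by simp [hS, hxj, hji]) (Finset.mem_filter.mp hj).2
    · intro hi; simp at hi
  -- all sets measurable (countable discrete space)
  have hmeas : ∀ s : Set (Fin d → Fin m), MeasurableSet s := fun s =>
    (Set.to_countable s).measurableSet
  -- each collision has probability 1/m
  have hcoll : ∀ j ∈ S, μ {h : Fin d → Fin m | h j = h i} = 1 / (m : ℝ≥0∞) := by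
    intro j hj
    have hji : j ≠ i := (Finset.mem_filter.mp hj).2.2
    have hset : {h : Fin d → Fin m | h j = h i} =
        ⋃ a : Fin m, {h : Fin d → Fin m | h j = a ∧ h i = a} := by
      ext h; simp only [Set.mem_setOf_eq, Set.mem_iUnion]
      constructor
      · intro he; exact ⟨h i, he, rfl⟩
      · rintro ⟨a, h1, h2⟩; rw [h1, h2]
    rw [hset, measure_iUnion ?_ (fun a => hmeas _)]
    · have : ∀ a : Fin m, μ {h : Fin d → Fin m | h j = a ∧ h i = a} =
          1 / (m : ℝ≥0∞) ^ 2 := fun a => hpair j i hji a a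
      rw [tsum_congr this, tsum_fintype]
      simp only [Finset.sum_const, Finset.card_univ, Fintype.card_fin, nsmul_eq_mul]
      rw [pow_two, one_div, ENNReal.mul_inv (Or.inl hm) (Or.inl hm'), ← mul_assoc,
        ENNReal.mul_inv_cancel hm hm', one_mul, one_div]
    · intro a b hab
      simp only [Function.onFun, Set.disjoint_left, Set.mem_setOf_eq]
      rintro h ⟨h1, -⟩ ⟨h2, -⟩
      exact hab (h1 ▸ h2 ▸ rfl)
  -- cardinality bound
  have hcard : S.card ≤ k := by
    have h1 : (S : Set (Fin d)) ⊆ {j | x j ≠ 0} := by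
      intro j hj; exact (Finset.mem_filter.mp hj).2.1
    calc S.card = (S : Set (Fin d)).ncard := (Set.ncard_coe_finset S).symm
      _ ≤ {j | x j ≠ 0}.ncard := Set.ncard_le_ncard h1 (Set.toFinite _)
      _ ≤ k := hxsparse
  calc μ {h : Fin d → Fin m | Dec (Sk h x) i h ≠ x i}
      ≤ μ (⋃ j ∈ S, {h : Fin d → Fin m | h j = h i}) := measure_mono hsub
    _ ≤ ∑ j ∈ S, μ {h : Fin d → Fin m | h j = h i} := measure_biUnion_finset_le S _
    _ = ∑ j ∈ S, 1 / (m : ℝ≥0∞) := Finset.sum_congr rfl hcoll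
    _ = S.card * (1 / (m : ℝ≥0∞)) := by rw [Finset.sum_const, nsmul_eq_mul]
    _ ≤ k * (1 / (m : ℝ≥0∞)) := by
        exact mul_le_mul_left (by exact_mod_cast Nat.cast_le.mpr hcard) _
    _ = (k : ℝ≥0∞) / (m : ℝ≥0∞) := by rw [mul_one_div]
end

section
/- Let d, k, m, t, s be positive integers, let w ∈ H_{d,s}, let x ∈ B_{d,k}, and let δ ∈ (0,1). Suppose m ≥ e·k and t ≥ ln(s/δ), and h_1, …, h_t : [d] → [m] are drawn independently, each from a pairwise independent distribution. Then the probability that Σ_{i=1}^d w_i · DecMin(Sk_{h_{1:t}}(x), i) ≠ w^⊤ x is at most δ. -/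
open MeasureTheory Finset
open scoped ENNReal NNReal BigOperators

lemma aux_dec_ge {d m : ℕ} (h : Fin d → Fin m) (x : Fin d → ℝ) (hx : ∀ i, 0 ≤ x i)
    (i : Fin d) : x i ≤ Sk h x (h i) := by
  unfold Sk
  exact Finset.single_le_sum (fun i' _ => hx i') (by simp)

lemma aux_collision {d m : ℕ} (h : Fin d → Fin m) (x : Fin d → ℝ) (i : Fin d)
    (hne : Sk h x (h i) ≠ x i) : ∃ i', i' ≠ i ∧ x i' ≠ 0 ∧ h i' = h i := by
  by_contra hcon
  push_neg at hcon
  apply hne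
  unfold Sk
  rw [Finset.sum_eq_single i]
  · intro i' hi' hii'
    simp only [Finset.mem_filter] at hi'
    by_contra hxz
    exact (hcon i' hii' hxz) hi'.2
  · intro hi
    exact absurd (by simp) hi

lemma decmin_eq {d m t : ℕ} (H : Fin t → Fin d → Fin m) (x : Fin d → ℝ)
    (hx : ∀ i, 0 ≤ x i) (i : Fin d) (j : Fin t) (hj : Sk (H j) x (H j i) = x i) :
    DecMin H x i = x i := by
  haveI : Nonempty (Fin t) := ⟨j⟩
  apply le_antisymm
  · exact (ciInf_le (Set.finite_range _).bddBelow j).trans_eq hj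
  · exact le_ciInf fun j' => aux_dec_ge (H j') x hx i

/-- For `w ∈ H_{d,s}`, `x ∈ B_{d,k}`, `m ≥ e·k`, `t ≥ ln(s/δ)`,
and `t` independent pairwise-independent hashes,
`Pr[∑ i, w i · DecMin(Sk_{h_{1:t}}(x), i) ≠ wᵀx] ≤ δ`. -/
theorem sum_decMin_error_le_delta
    (d k m t s : ℕ) (hd : 0 < d) (hk : 0 < k) (hm0 : 0 < m) (ht0 : 0 < t) (hs : 0 < s)
    (δ : ℝ) (hδ : 0 < δ) (hδ1 : δ < 1)
    (w : Fin d → ℝ) (hw : {i | w i ≠ 0}.ncard ≤ s)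
    (x : Fin d → ℝ)
    (hxbin : ∀ i, x i = 0 ∨ x i = 1)
    (hxsparse : {i | x i ≠ 0}.ncard ≤ k)
    (μ : Fin t → Measure (Fin d → Fin m))
    (hprob : ∀ j, IsProbabilityMeasure (μ j))
    (hpair : ∀ j, PairwiseIndepHash (μ j))
    (hm : Real.exp 1 * (k : ℝ) ≤ (m : ℝ))
    (htlog : Real.log ((s : ℝ) / δ) ≤ (t : ℝ)) :
    Measure.pi μ {H : Fin t → Fin d → Fin m |
        (∑ i, w i * DecMin H x i) ≠ ∑ i, w i * x i}
      ≤ ENNReal.ofReal δ := by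
  classical
  have meas_all : ∀ S : Set (Fin d → Fin m), MeasurableSet S :=
    fun S => (Set.to_countable S).measurableSet
  have hxnn : ∀ i, 0 ≤ x i := fun i => by rcases hxbin i with h | h <;> rw [h] <;> norm_num
  have hmpos : (0:ℝ) < m := by exact_mod_cast hm0
  have hspos : (0:ℝ) < s := by exact_mod_cast hs
  set Sw : Finset (Fin d) := Finset.univ.filter (fun i => w i ≠ 0) with hSw
  set Sx : Finset (Fin d) := Finset.univ.filter (fun i => x i ≠ 0) with hSx
  have hSwcard : Sw.card ≤ s := by
    have h1 : {i | w i ≠ 0}.ncard = Sw.card := by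
      rw [Set.ncard_eq_toFinset_card']
      congr 1
      ext i
      simp [hSw]
    omega
  have hSxcard : Sx.card ≤ k := by
    have h1 : {i | x i ≠ 0}.ncard = Sx.card := by
      rw [Set.ncard_eq_toFinset_card']
      congr 1
      ext i
      simp [hSx]
    omega
  set A : Fin d → Set (Fin t → Fin d → Fin m) :=
    fun i => {H | ∀ j, Sk (H j) x ((H j) i) ≠ x i} with hA
  -- real-number estimate
  have hepos := Real.exp_pos 1
  have hkm : (k:ℝ)/m ≤ (Real.exp 1)⁻¹ := by
    rw [div_le_iff₀ hmpos, inv_mul_eq_div, le_div_iff₀ hepos, mul_comm]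
    exact hm
  have hreal : ((k:ℝ)/m)^t ≤ δ / s := by
    have h2 : ((k:ℝ)/m)^t ≤ Real.exp (-(t:ℝ)) := by
      calc ((k:ℝ)/m)^t ≤ ((Real.exp 1)⁻¹)^t := pow_le_pow_left₀ (by positivity) hkm t
        _ = (Real.exp (-1))^t := by rw [Real.exp_neg]
        _ = Real.exp ((t:ℝ) * (-1)) := (Real.exp_nat_mul (-1) t).symm
        _ = Real.exp (-(t:ℝ)) := by ring_nf
    have h3 : Real.exp (-(t:ℝ)) ≤ δ / s := by
      have hsd : (0:ℝ) < (s:ℝ)/δ := by positivity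
      have h4 : Real.exp (-(t:ℝ)) ≤ Real.exp (-(Real.log ((s:ℝ)/δ))) :=
        Real.exp_le_exp.mpr (by linarith)
      rwa [Real.exp_neg (Real.log ((s:ℝ)/δ)), Real.exp_log hsd, inv_div] at h4
    linarith
  -- per-hash collision bound
  have hBi : ∀ (i : Fin d) (j : Fin t),
      μ j {h : Fin d → Fin m | Sk h x (h i) ≠ x i} ≤ ENNReal.ofReal ((k:ℝ)/m) := by
    intro i j
    have hsub2 : {h : Fin d → Fin m | Sk h x (h i) ≠ x i}
        ⊆ ⋃ i' ∈ Sx.erase i, {h : Fin d → Fin m | h i' = h i} := by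
      intro h hh
      obtain ⟨i', hne, hx', hcol⟩ := aux_collision h x i hh
      exact Set.mem_biUnion (Finset.mem_erase.mpr ⟨hne, by simp [hSx, hx']⟩) hcol
    have hone : ∀ i' ∈ Sx.erase i, μ j {h : Fin d → Fin m | h i' = h i} = 1/(m:ℝ≥0∞) := by
      intro i' hi'
      have hne : i ≠ i' := fun e => (Finset.mem_erase.mp hi').1 e.symm
      have hsplit : {h : Fin d → Fin m | h i' = h i}
          = ⋃ a : Fin m, {h : Fin d → Fin m | h i = a ∧ h i' = a} := by
        ext h
        simp only [Set.mem_setOf_eq, Set.mem_iUnion]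
        constructor
        · intro he; exact ⟨h i, rfl, he⟩
        · rintro ⟨a, ha, hb⟩; rw [ha, hb]
      have hdisj : Pairwise (Function.onFun Disjoint
          (fun a : Fin m => {h : Fin d → Fin m | h i = a ∧ h i' = a})) := by
        intro a b hab
        simp only [Function.onFun, Set.disjoint_left]
        rintro h ⟨ha, -⟩ ⟨hb, -⟩
        exact hab (ha.symm.trans hb)
      have hm' : (m:ℝ≥0∞) ≠ 0 := by exact_mod_cast hm0.ne'
      have hmtop : (m:ℝ≥0∞) ≠ ⊤ := ENNReal.natCast_ne_top m
      rw [hsplit, measure_iUnion hdisj (fun a => meas_all _)]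
      have : ∀ a : Fin m, μ j {h : Fin d → Fin m | h i = a ∧ h i' = a} = 1/(m:ℝ≥0∞)^2 :=
        fun a => hpair j i i' hne a a
      rw [tsum_fintype]
      simp only [this, Finset.sum_const, Finset.card_univ, Fintype.card_fin, nsmul_eq_mul]
      rw [one_div, one_div, pow_two, ENNReal.mul_inv (Or.inl hm') (Or.inl hmtop),
        ← mul_assoc, ENNReal.mul_inv_cancel hm' hmtop, one_mul]
    calc μ j {h : Fin d → Fin m | Sk h x (h i) ≠ x i}
        ≤ μ j (⋃ i' ∈ Sx.erase i, {h : Fin d → Fin m | h i' = h i}) := measure_mono hsub2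
      _ ≤ ∑ i' ∈ Sx.erase i, μ j {h : Fin d → Fin m | h i' = h i} :=
          measure_biUnion_finset_le _ _
      _ = (Sx.erase i).card • (1/(m:ℝ≥0∞)) := by rw [Finset.sum_congr rfl hone, Finset.sum_const]
      _ = ((Sx.erase i).card : ℝ≥0∞) / m := by rw [nsmul_eq_mul, mul_one_div]
      _ ≤ (k:ℝ≥0∞) / m := by
          gcongr
          exact le_trans Finset.card_erase_le hSxcard
      _ = ENNReal.ofReal ((k:ℝ)/m) := by
          rw [ENNReal.ofReal_div_of_pos hmpos, ENNReal.ofReal_natCast, ENNReal.ofReal_natCast]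
  -- bound for each A i
  have key : ∀ i : Fin d, Measure.pi μ (A i) ≤ ENNReal.ofReal (δ / s) := by
    intro i
    have hApi : A i = Set.univ.pi (fun _ : Fin t => {h : Fin d → Fin m | Sk h x (h i) ≠ x i}) := by
      ext H
      simp [hA, Set.mem_pi]
    calc Measure.pi μ (A i)
        = ∏ j : Fin t, μ j {h : Fin d → Fin m | Sk h x (h i) ≠ x i} := by
          rw [hApi, Measure.pi_pi]
      _ ≤ ∏ _j : Fin t, ENNReal.ofReal ((k:ℝ)/m) := Finset.prod_le_prod' (fun j _ => hBi i j)
      _ = ENNReal.ofReal ((k:ℝ)/m) ^ t := by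
          rw [Finset.prod_const, Finset.card_univ, Fintype.card_fin]
      _ = ENNReal.ofReal (((k:ℝ)/m) ^ t) := by rw [ENNReal.ofReal_pow (by positivity)]
      _ ≤ ENNReal.ofReal (δ / s) := ENNReal.ofReal_le_ofReal hreal
  -- event inclusion
  have hsub : {H : Fin t → Fin d → Fin m | (∑ i, w i * DecMin H x i) ≠ ∑ i, w i * x i}
      ⊆ ⋃ i ∈ Sw, A i := by
    intro H hH
    by_contra hnot
    apply hH
    refine Finset.sum_congr rfl (fun i _ => ?_)
    by_cases hwi : w i = 0
    · simp [hwi]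
    · have hiSw : i ∈ Sw := by simp [hSw, hwi]
      have hex : ∃ j, Sk (H j) x ((H j) i) = x i := by
        by_contra hall
        push_neg at hall
        exact hnot (Set.mem_biUnion hiSw hall)
      obtain ⟨j, hj⟩ := hex
      rw [decmin_eq H x hxnn i j hj]
  -- union bound
  calc Measure.pi μ {H : Fin t → Fin d → Fin m |
        (∑ i, w i * DecMin H x i) ≠ ∑ i, w i * x i}
      ≤ Measure.pi μ (⋃ i ∈ Sw, A i) := measure_mono hsub
    _ ≤ ∑ i ∈ Sw, Measure.pi μ (A i) := measure_biUnion_finset_le _ _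
    _ ≤ ∑ _i ∈ Sw, ENNReal.ofReal (δ / s) := Finset.sum_le_sum (fun i _ => key i)
    _ = Sw.card • ENNReal.ofReal (δ / s) := Finset.sum_const _
    _ = (Sw.card : ℝ≥0∞) * ENNReal.ofReal (δ / s) := nsmul_eq_mul _ _
    _ ≤ (s : ℝ≥0∞) * ENNReal.ofReal (δ / s) := by
        gcongr
        all_goals exact_mod_cast hSwcard
    _ = ENNReal.ofReal δ := by
        rw [← ENNReal.ofReal_natCast s, ← ENNReal.ofReal_mul (by positivity)]
        congr 1
        field_simp
end

section
/- Let d, k, m, t, s be positive integers, let w ∈ H_{d,s}, let x ∈ B_{d,k}, and let δ ∈ (0,1). Suppose m ≥ e·k and t ≥ ln(s/δ), and h_1, …, h_t : [d] → [m] are drawn independently, each from a pairwise independent distribution. Then the probability that Σ_{i=1}^d w_i · DecAnd(BSk_{h_{1:t}}(x), i) ≠ w^⊤ x is at most δ. -/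
open MeasureTheory Finset
open scoped ENNReal NNReal BigOperators

lemma collide_bound {d m : ℕ} (hm0 : 0 < m)
    (μ : Measure (Fin d → Fin m)) (hpair : PairwiseIndepHash μ)
    (i i' : Fin d) (hne : i ≠ i') :
    μ {h : Fin d → Fin m | h i' = h i} ≤ 1 / (m : ℝ≥0∞) := by
  have hset : {h : Fin d → Fin m | h i' = h i}
      = ⋃ a : Fin m, {h | h i = a ∧ h i' = a} := by
    ext h
    simp only [Set.mem_setOf_eq, Set.mem_iUnion]
    constructor
    · intro he; exact ⟨h i, rfl, he⟩
    · rintro ⟨a, h1, h2⟩; rw [h1, h2]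
  have hmne : (m : ℝ≥0∞) ≠ 0 := Nat.cast_ne_zero.mpr hm0.ne'
  have hmtop : (m : ℝ≥0∞) ≠ ⊤ := ENNReal.natCast_ne_top m
  calc μ {h : Fin d → Fin m | h i' = h i}
      ≤ ∑' a : Fin m, μ {h | h i = a ∧ h i' = a} := by
        rw [hset]; exact measure_iUnion_le _
    _ = ∑ a : Fin m, μ {h | h i = a ∧ h i' = a} := tsum_fintype _
    _ = ∑ a : Fin m, 1 / (m : ℝ≥0∞) ^ 2 := by
        refine Finset.sum_congr rfl fun a _ => hpair i i' hne a a
    _ = (m : ℝ≥0∞) * (1 / (m : ℝ≥0∞) ^ 2) := by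
        rw [Finset.sum_const, Finset.card_univ, Fintype.card_fin, nsmul_eq_mul]
    _ = 1 / (m : ℝ≥0∞) := by
        rw [one_div, one_div, pow_two, ENNReal.mul_inv (Or.inl hmne) (Or.inl hmtop),
          ← mul_assoc, ENNReal.mul_inv_cancel hmne hmtop, one_mul]

lemma single_hash_bound {d m k : ℕ} (hm0 : 0 < m)
    (μ : Measure (Fin d → Fin m)) (hpair : PairwiseIndepHash μ)
    (x : Fin d → Bool) (hx : {i | x i = true}.ncard ≤ k)
    (i : Fin d) (hxi : x i = false) :
    μ {h : Fin d → Fin m | BSk h x (h i) = true} ≤ (k : ℝ≥0∞) / m := by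
  classical
  set T : Finset (Fin d) := Finset.univ.filter (fun i' => x i' = true) with hT
  have hTcard : T.card ≤ k := by
    have hTs : {i | x i = true} = ↑T := by ext i'; simp [hT]
    rwa [hTs, Set.ncard_coe_finset] at hx
  have hsub : {h : Fin d → Fin m | BSk h x (h i) = true}
      ⊆ ⋃ i' ∈ T, {h : Fin d → Fin m | h i' = h i} := by
    intro h hh
    simp only [Set.mem_setOf_eq, BSk, decide_eq_true_eq] at hh
    obtain ⟨i', h1, h2⟩ := hh
    simp only [Set.mem_iUnion]
    exact ⟨i', by simp [hT, h2], h1⟩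
  calc μ {h : Fin d → Fin m | BSk h x (h i) = true}
      ≤ ∑ i' ∈ T, μ {h : Fin d → Fin m | h i' = h i} :=
        (measure_mono hsub).trans (measure_biUnion_finset_le T _)
    _ ≤ ∑ _i' ∈ T, 1 / (m : ℝ≥0∞) := by
        refine Finset.sum_le_sum fun i' hi' => ?_
        have hne : i ≠ i' := fun he => by subst he; simp [hT, hxi] at hi'
        exact collide_bound hm0 μ hpair i i' hne
    _ = T.card * (1 / (m : ℝ≥0∞)) := by rw [Finset.sum_const, nsmul_eq_mul]
    _ ≤ (k : ℝ≥0∞) * (1 / (m : ℝ≥0∞)) := by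
        exact mul_le_mul_left (by exact_mod_cast hTcard) _
    _ = (k : ℝ≥0∞) / m := by rw [mul_one_div]

/-- For `w ∈ H_{d,s}`, `x ∈ B_{d,k}`, `m ≥ e·k`, `t ≥ ln(s/δ)`,
and `t` independent pairwise-independent hashes,
`Pr[∑ i, w i · DecAnd(BSk_{h_{1:t}}(x), i) ≠ wᵀx] ≤ δ`. -/
theorem sum_decAnd_error_le_delta
    (d k m t s : ℕ) (hd : 0 < d) (hk : 0 < k) (hm0 : 0 < m) (ht0 : 0 < t) (hs : 0 < s)
    (δ : ℝ) (hδ : 0 < δ) (hδ1 : δ < 1)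
    (w : Fin d → ℝ) (hw : {i | w i ≠ 0}.ncard ≤ s)
    (x : Fin d → Bool)
    (hxsparse : {i | x i = true}.ncard ≤ k)
    (μ : Fin t → Measure (Fin d → Fin m))
    (hprob : ∀ j, IsProbabilityMeasure (μ j))
    (hpair : ∀ j, PairwiseIndepHash (μ j))
    (hm : Real.exp 1 * (k : ℝ) ≤ (m : ℝ))
    (htlog : Real.log ((s : ℝ) / δ) ≤ (t : ℝ)) :
    Measure.pi μ {H : Fin t → Fin d → Fin m |
        (∑ i, w i * (if DecAnd H x i then (1 : ℝ) else 0))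
          ≠ ∑ i, w i * (if x i then (1 : ℝ) else 0)}
      ≤ ENNReal.ofReal δ := by
  classical
  haveI : ∀ j, IsProbabilityMeasure (μ j) := hprob
  -- DecAnd is true whenever x i is true
  have hDec_of_x : ∀ (H : Fin t → Fin d → Fin m) (i : Fin d), x i = true →
      DecAnd H x i = true := by
    intro H i hxi
    simp only [DecAnd, decide_eq_true_eq]
    intro j
    simp only [BSk, decide_eq_true_eq]
    exact ⟨i, rfl, hxi⟩
  set Sw : Finset (Fin d) := Finset.univ.filter (fun i => w i ≠ 0) with hSw
  have hSwcard : Sw.card ≤ s := by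
    have hset : {i | w i ≠ 0} = ↑Sw := by ext i'; simp [hSw]
    rwa [hset, Set.ncard_coe_finset] at hw
  -- event inclusion
  have hincl : {H : Fin t → Fin d → Fin m |
        (∑ i, w i * (if DecAnd H x i then (1 : ℝ) else 0))
          ≠ ∑ i, w i * (if x i then (1 : ℝ) else 0)}
      ⊆ ⋃ i ∈ Sw, {H : Fin t → Fin d → Fin m | x i = false ∧ DecAnd H x i = true} := by
    intro H hH
    simp only [Set.mem_setOf_eq] at hH
    by_contra hcon
    apply hH
    refine Finset.sum_congr rfl fun i _ => ?_
    by_cases hwi : w i = 0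
    · simp [hwi]
    · have hi : i ∈ Sw := by simp [hSw, hwi]
      cases hxi : x i with
      | true => rw [hDec_of_x H i hxi]
      | false =>
        have : ¬ (x i = false ∧ DecAnd H x i = true) := by
          intro hc
          exact hcon (Set.mem_biUnion hi hc)
        have hnd : DecAnd H x i = false := by
          cases hD : DecAnd H x i with
          | true => exact absurd ⟨hxi, hD⟩ this
          | false => rfl
        rw [hnd]
  -- per-index bound
  have hkm : (k : ℝ≥0∞) / m ≤ ENNReal.ofReal (Real.exp (-1)) := by
    have hmpos : (0:ℝ) < m := by exact_mod_cast hm0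
    have hcast : ((k:ℝ≥0∞)/m) = ENNReal.ofReal ((k:ℝ)/m) := by
      rw [ENNReal.ofReal_div_of_pos hmpos, ENNReal.ofReal_natCast, ENNReal.ofReal_natCast]
    rw [hcast]
    apply ENNReal.ofReal_le_ofReal
    rw [Real.exp_neg, div_le_iff₀ hmpos, inv_mul_eq_div, le_div_iff₀ (Real.exp_pos 1)]
    nlinarith [hm]
  have hbound : ∀ i : Fin d,
      Measure.pi μ {H : Fin t → Fin d → Fin m | x i = false ∧ DecAnd H x i = true}
        ≤ ENNReal.ofReal (Real.exp (-1)) ^ t := by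
    intro i
    cases hxi : x i with
    | true =>
      have he : {H : Fin t → Fin d → Fin m | x i = false ∧ DecAnd H x i = true} = ∅ := by
        ext H; simp [hxi]
      simp [he]
    | false =>
      have hsetpi : {H : Fin t → Fin d → Fin m | false = false ∧ DecAnd H x i = true}
          = Set.univ.pi (fun _ : Fin t => {h : Fin d → Fin m | BSk h x (h i) = true}) := by
        ext H
        simp [DecAnd, Set.mem_pi]
      rw [hsetpi, Measure.pi_pi]
      calc ∏ j : Fin t, μ j {h : Fin d → Fin m | BSk h x (h i) = true}
          ≤ ∏ _j : Fin t, ENNReal.ofReal (Real.exp (-1)) := by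
            refine Finset.prod_le_prod' fun j _ => ?_
            exact (single_hash_bound hm0 (μ j) (hpair j) x hxsparse i hxi).trans hkm
        _ = ENNReal.ofReal (Real.exp (-1)) ^ t := by
            rw [Finset.prod_const, Finset.card_univ, Fintype.card_fin]
  have hfinal : (s:ℝ) * Real.exp (-(t:ℝ)) ≤ δ := by
    have hsd : (0:ℝ) < (s:ℝ)/δ := div_pos (by exact_mod_cast hs) hδ
    have h1 : (s:ℝ)/δ ≤ Real.exp (t:ℝ) := by
      calc (s:ℝ)/δ = Real.exp (Real.log ((s:ℝ)/δ)) := (Real.exp_log hsd).symm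
        _ ≤ Real.exp (t:ℝ) := Real.exp_le_exp.mpr htlog
    have h2 : (s:ℝ) ≤ δ * Real.exp (t:ℝ) := by
      rw [div_le_iff₀ hδ] at h1; linarith [h1]
    rw [Real.exp_neg, ← div_eq_mul_inv, div_le_iff₀ (Real.exp_pos _)]
    linarith [h2]
  calc Measure.pi μ {H : Fin t → Fin d → Fin m |
        (∑ i, w i * (if DecAnd H x i then (1 : ℝ) else 0))
          ≠ ∑ i, w i * (if x i then (1 : ℝ) else 0)}
      ≤ ∑ i ∈ Sw, Measure.pi μ {H : Fin t → Fin d → Fin m | x i = false ∧ DecAnd H x i = true} :=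
        (measure_mono hincl).trans (measure_biUnion_finset_le Sw _)
    _ ≤ ∑ _i ∈ Sw, ENNReal.ofReal (Real.exp (-1)) ^ t :=
        Finset.sum_le_sum fun i _ => hbound i
    _ = Sw.card * (ENNReal.ofReal (Real.exp (-1)) ^ t) := by
        rw [Finset.sum_const, nsmul_eq_mul]
    _ ≤ (s : ℝ≥0∞) * (ENNReal.ofReal (Real.exp (-1)) ^ t) :=
        mul_le_mul_left (by exact_mod_cast hSwcard) _
    _ = ENNReal.ofReal ((s:ℝ) * Real.exp (-(t:ℝ))) := by
        rw [← ENNReal.ofReal_pow (Real.exp_nonneg _) t, ← Real.exp_nat_mul,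
          ← ENNReal.ofReal_natCast s, ← ENNReal.ofReal_mul (by positivity)]
        norm_num
    _ ≤ ENNReal.ofReal δ := ENNReal.ofReal_le_ofReal hfinal
end

section
/- Let d, k, m, t, s be positive integers, let δ ∈ (0,1), and let w ∈ H_{d,s} with support S(w). Suppose m ≥ e·k and t ≥ ln(s/δ), and let h_1, …, h_t : [d] → [m] be drawn independently, each from a pairwise independent distribution. Then for every x ∈ B_{d,k}, with probability at least 1 − δ over the draw of h_1, …, h_t, the single-hidden-layer ReLU network defined on Y = BSk_{h_{1:t}}(x) by N(Y) = Σ_{i ∈ S(w)} w_i · ReLU( Σ_{j=1}^t Y_{h_j(i), j} − (t − 1) ) satisfies N(BSk_{h_{1:t}}(x)) = w^⊤ x. Moreover, the weight vector feeding each hidden unit has entries in {0,1} with at most t nonzeros. -/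
open MeasureTheory Finset
open scoped ENNReal NNReal BigOperators

/-- The Boolean sketch of `x ∈ {0,1}^d` under hash `h`, as a real `0`-`1` vector:
`(BSkR h x) l = OR_{i : h i = l} x i`. -/
noncomputable def BSkR {d m : ℕ} (h : Fin d → Fin m) (x : Fin d → Bool) : Fin m → ℝ :=
  fun l => if ∃ i, h i = l ∧ x i = true then 1 else 0

/-- For a pairwise independent hash distribution, the probability that two fixed distinct
coordinates collide is exactly `1/m`. -/
lemma collide_prob {d m : ℕ} (hm0 : 0 < m) (μ : Measure (Fin d → Fin m))
    (hpair : PairwiseIndepHash μ) (i i' : Fin d) (hne : i' ≠ i) :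
    μ {h | h i' = h i} = 1 / (m : ℝ≥0∞) := by
  have hU : {h : Fin d → Fin m | h i' = h i} = ⋃ a : Fin m, {h | h i' = a ∧ h i = a} := by
    ext h; simp [eq_comm]
  have hmne : (m : ℝ≥0∞) ≠ 0 := by exact_mod_cast hm0.ne'
  have hmtop : (m : ℝ≥0∞) ≠ ⊤ := ENNReal.natCast_ne_top m
  rw [hU, measure_iUnion ?_ (fun a => MeasurableSet.of_discrete)]
  · rw [tsum_fintype]
    have : ∀ a : Fin m, μ {h | h i' = a ∧ h i = a} = 1 / (m : ℝ≥0∞) ^ 2 :=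
      fun a => hpair i' i hne a a
    simp only [this, Finset.sum_const, Finset.card_univ, Fintype.card_fin, nsmul_eq_mul]
    rw [pow_two, one_div, one_div, ENNReal.mul_inv (Or.inl hmne) (Or.inl hmtop),
      ← mul_assoc, ENNReal.mul_inv_cancel hmne hmtop, one_mul]
  · intro a b hab
    simp only [Set.disjoint_left]
    rintro h ⟨h1, h2⟩ ⟨h3, h4⟩
    exact hab (h1 ▸ h3 ▸ rfl)

/-- The real-arithmetic core: `s (k/m)^t ≤ δ` under the assumptions. -/
lemma real_arith (k m t s : ℕ) (hm0 : 0 < m) (δ : ℝ) (hδ : 0 < δ) (hs : 0 < s)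
    (hm : Real.exp 1 * (k : ℝ) ≤ (m : ℝ))
    (htlog : Real.log ((s : ℝ) / δ) ≤ (t : ℝ)) :
    (s : ℝ) * ((k : ℝ) / m) ^ t ≤ δ := by
  have hmpos : (0:ℝ) < m := by exact_mod_cast hm0
  have hinv : Real.exp (-1) * Real.exp 1 = 1 := by rw [← Real.exp_add]; norm_num
  have h1 : (k : ℝ) / m ≤ Real.exp (-1) := by
    rw [div_le_iff₀ hmpos]
    nlinarith [mul_le_mul_of_nonneg_left hm (Real.exp_pos (-1)).le]
  have h2 : ((k : ℝ) / m) ^ t ≤ Real.exp (-(t:ℝ)) := by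
    calc ((k : ℝ) / m) ^ t ≤ Real.exp (-1) ^ t := by
          exact pow_le_pow_left₀ (by positivity) h1 t
      _ = Real.exp (-(t:ℝ)) := by rw [← Real.exp_nat_mul]; ring_nf
  have hsd : (0:ℝ) < (s:ℝ) / δ := by positivity
  have h3 : (s : ℝ) ≤ δ * Real.exp (t:ℝ) := by
    have := Real.exp_le_exp.mpr htlog
    rw [Real.exp_log hsd, div_le_iff₀ hδ] at this
    linarith
  calc (s : ℝ) * ((k : ℝ) / m) ^ t ≤ (s:ℝ) * Real.exp (-(t:ℝ)) :=
        mul_le_mul_of_nonneg_left h2 (by positivity)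
    _ ≤ δ := by
        rw [Real.exp_neg, mul_inv_le_iff₀' (Real.exp_pos _)]
        linarith

open Classical in
/-- For `w ∈ H_{d,s}`, `m ≥ e·k`, `t ≥ ln(s/δ)`, and any
`x ∈ B_{d,k}`, with probability at least `1 − δ` over `t` independent
pairwise-independent hashes, the single-hidden-layer ReLU network
`N(Y) = ∑_{i ∈ S(w)} w i · ReLU(∑_j Y (h_j i) j − (t−1))` evaluated on
`Y = BSk_{h_{1:t}}(x)` outputs `wᵀx`.  (Each hidden unit reads the `t` sketch
entries indexed by `h_j i`, so its incoming weights are `0`-`1` valued with at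
most `t` nonzeros.) -/
theorem network_on_sketch_computes_sparse_linear
    (d k m t s : ℕ) (hd : 0 < d) (hk : 0 < k) (hm0 : 0 < m) (ht0 : 0 < t) (hs : 0 < s)
    (δ : ℝ) (hδ : 0 < δ) (hδ1 : δ < 1)
    (w : Fin d → ℝ) (hw : {i | w i ≠ 0}.ncard ≤ s)
    (μ : Fin t → Measure (Fin d → Fin m))
    (hprob : ∀ j, IsProbabilityMeasure (μ j))
    (hpair : ∀ j, PairwiseIndepHash (μ j))
    (hm : Real.exp 1 * (k : ℝ) ≤ (m : ℝ))
    (htlog : Real.log ((s : ℝ) / δ) ≤ (t : ℝ))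
    (x : Fin d → Bool) (hxsparse : {i | x i = true}.ncard ≤ k) :
    1 - ENNReal.ofReal δ ≤
      Measure.pi μ {H : Fin t → Fin d → Fin m |
        (∑ i ∈ Finset.univ.filter fun i => w i ≠ 0,
            w i * max 0 ((∑ j : Fin t, BSkR (H j) x ((H j) i)) - ((t : ℝ) - 1)))
          = ∑ i, w i * (if x i then (1 : ℝ) else 0)} := by
  classical
  set S : Finset (Fin d) := Finset.univ.filter fun i => w i ≠ 0 with hS
  set T : Finset (Fin d) := Finset.univ.filter fun i => x i = true with hT
  have hScard : S.card ≤ s := by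
    have : {i | w i ≠ 0}.ncard = S.card := by
      rw [Set.ncard_eq_toFinset_card']; congr 1
      ext i; simp [hS]
    omega
  have hTcard : T.card ≤ k := by
    have : {i | x i = true}.ncard = T.card := by
      rw [Set.ncard_eq_toFinset_card']; congr 1
      ext i; simp [hT]
    omega
  set G : Set (Fin t → Fin d → Fin m) := {H |
        (∑ i ∈ S, w i * max 0 ((∑ j : Fin t, BSkR (H j) x ((H j) i)) - ((t : ℝ) - 1)))
          = ∑ i, w i * (if x i then (1 : ℝ) else 0)} with hG
  -- the "bad" event
  set Bi : Fin d → Set (Fin t → Fin d → Fin m) := fun i =>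
    Set.univ.pi (fun _ : Fin t => {h : Fin d → Fin m | ∃ i', h i' = h i ∧ x i' = true}) with hBi
  set S' : Finset (Fin d) := S.filter fun i => x i = false with hS'
  set Bad : Set (Fin t → Fin d → Fin m) := ⋃ i ∈ S', Bi i with hBad
  -- Step 1: Gᶜ ⊆ Bad, i.e. any H outside Bad is good.
  have hGood : Gᶜ ⊆ Bad := by
    intro H hH
    by_contra hnb
    apply hH
    -- for every i in S with x i false, some j has no collision
    have hkey : ∀ i ∈ S, x i = false →
        ∃ j : Fin t, ¬ ∃ i', H j i' = H j i ∧ x i' = true := by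
      intro i hi hxi
      have hi' : i ∈ S' := by
        rw [hS']; exact Finset.mem_filter.mpr ⟨hi, hxi⟩
      have hnotin : H ∉ Bi i := fun hmem => hnb (by
        rw [hBad]; exact Set.mem_biUnion hi' hmem)
      simp only [hBi, Set.mem_pi, Set.mem_univ, forall_true_left, Set.mem_setOf_eq,
        not_forall] at hnotin
      obtain ⟨j, hj⟩ := hnotin
      exact ⟨j, hj⟩
    -- show H ∈ G
    show (∑ i ∈ S, w i * max 0 ((∑ j : Fin t, BSkR (H j) x ((H j) i)) - ((t : ℝ) - 1)))
          = ∑ i, w i * (if x i then (1 : ℝ) else 0)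
    have hrhs : (∑ i, w i * (if x i then (1 : ℝ) else 0))
        = ∑ i ∈ S, w i * (if x i then (1 : ℝ) else 0) := by
      rw [hS]
      exact (Finset.sum_filter_of_ne (fun i _ hne => by
        intro hwi; apply hne; rw [hwi, zero_mul])).symm
    rw [hrhs]
    apply Finset.sum_congr rfl
    intro i hi
    by_cases hxi : x i = true
    · -- every sketch entry is 1
      have hone : ∀ j : Fin t, BSkR (H j) x ((H j) i) = 1 := by
        intro j
        unfold BSkR
        rw [if_pos ⟨i, rfl, hxi⟩]
      rw [Finset.sum_congr rfl (fun j _ => hone j)]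
      simp [hxi]
    · -- some j has no collision; ReLU is 0
      have hxi' : x i = false := by simpa using hxi
      obtain ⟨j0, hj0⟩ := hkey i hi hxi'
      have hle1 : ∀ j : Fin t, BSkR (H j) x ((H j) i) ≤ 1 := by
        intro j; unfold BSkR; split <;> norm_num
      have hz : BSkR (H j0) x ((H j0) i) = 0 := by
        unfold BSkR; rw [if_neg hj0]
      have hsum : (∑ j : Fin t, BSkR (H j) x ((H j) i)) ≤ (t : ℝ) - 1 := by
        rw [← Finset.sum_erase_add _ _ (Finset.mem_univ j0), hz, add_zero]
        calc (∑ j ∈ Finset.univ.erase j0, BSkR (H j) x ((H j) i))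
            ≤ (Finset.univ.erase j0).card • (1:ℝ) :=
              Finset.sum_le_card_nsmul _ _ _ (fun j _ => hle1 j)
          _ = (t : ℝ) - 1 := by
              rw [Finset.card_erase_of_mem (Finset.mem_univ j0), Finset.card_univ,
                Fintype.card_fin, nsmul_eq_mul, mul_one, Nat.cast_sub ht0, Nat.cast_one]
      have : max 0 ((∑ j : Fin t, BSkR (H j) x ((H j) i)) - ((t : ℝ) - 1)) = 0 :=
        max_eq_left (by linarith)
      rw [this]
      simp [hxi']
  -- Step 2: bound the measure of Bad
  have hmne : (m : ℝ≥0∞) ≠ 0 := by exact_mod_cast hm0.ne'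
  have hBadBound : Measure.pi μ Bad ≤ ENNReal.ofReal δ := by
    have hBi : ∀ i ∈ S', Measure.pi μ (Bi i) ≤ ((k : ℝ≥0∞) * (1 / m)) ^ t := by
      intro i hiS'
      have hxi : x i = false := by
        simp only [hS', Finset.mem_filter] at hiS'
        exact hiS'.2
      rw [hBi, Measure.pi_pi]
      have hCj : ∀ j : Fin t,
          μ j {h : Fin d → Fin m | ∃ i', h i' = h i ∧ x i' = true}
            ≤ (k : ℝ≥0∞) * (1 / m) := by
        intro j
        have hsub : {h : Fin d → Fin m | ∃ i', h i' = h i ∧ x i' = true}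
            ⊆ ⋃ i' ∈ T, {h : Fin d → Fin m | h i' = h i} := by
          intro h ⟨i', hcol, hxi'⟩
          have hi'T : i' ∈ T := by
            rw [hT]; exact Finset.mem_filter.mpr ⟨Finset.mem_univ _, hxi'⟩
          exact Set.mem_biUnion hi'T hcol
        calc μ j {h : Fin d → Fin m | ∃ i', h i' = h i ∧ x i' = true}
            ≤ μ j (⋃ i' ∈ T, {h : Fin d → Fin m | h i' = h i}) := measure_mono hsub
          _ ≤ ∑ i' ∈ T, μ j {h : Fin d → Fin m | h i' = h i} :=
              measure_biUnion_finset_le T _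
          _ ≤ ∑ _i' ∈ T, (1 / (m : ℝ≥0∞)) := by
              apply Finset.sum_le_sum
              intro i' hi'T
              have hne : i' ≠ i := by
                intro heq
                have : x i' = true := by
                  simp only [hT, Finset.mem_filter] at hi'T; exact hi'T.2
                rw [heq, hxi] at this; exact Bool.false_ne_true this
              rw [collide_prob hm0 (μ j) (hpair j) i i' hne]
          _ = T.card * (1 / (m : ℝ≥0∞)) := by rw [Finset.sum_const, nsmul_eq_mul]
          _ ≤ (k : ℝ≥0∞) * (1 / m) := by
              apply mul_le_mul_left
              exact_mod_cast Nat.cast_le.mpr hTcard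
      calc (∏ j : Fin t, μ j {h : Fin d → Fin m | ∃ i', h i' = h i ∧ x i' = true})
          ≤ ∏ _j : Fin t, ((k : ℝ≥0∞) * (1 / m)) :=
            Finset.prod_le_prod' (fun j _ => hCj j)
        _ = ((k : ℝ≥0∞) * (1 / m)) ^ t := by
            rw [Finset.prod_const, Finset.card_univ, Fintype.card_fin]
    calc Measure.pi μ Bad ≤ ∑ i ∈ S', Measure.pi μ (Bi i) := measure_biUnion_finset_le S' Bi
      _ ≤ ∑ _i ∈ S', ((k : ℝ≥0∞) * (1 / m)) ^ t := Finset.sum_le_sum hBi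
      _ = S'.card * ((k : ℝ≥0∞) * (1 / m)) ^ t := by rw [Finset.sum_const, nsmul_eq_mul]
      _ ≤ (s : ℝ≥0∞) * ((k : ℝ≥0∞) * (1 / m)) ^ t := by
          apply mul_le_mul_left
          have : S'.card ≤ s := le_trans (Finset.card_filter_le _ _) hScard
          exact_mod_cast Nat.cast_le.mpr this
      _ = ENNReal.ofReal ((s : ℝ) * ((k : ℝ) / m) ^ t) := by
          rw [ENNReal.ofReal_mul (by positivity), ENNReal.ofReal_pow (by positivity),
            ENNReal.ofReal_natCast]
          congr 2
          rw [ENNReal.ofReal_div_of_pos (by exact_mod_cast hm0), ENNReal.ofReal_natCast,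
            ENNReal.ofReal_natCast, mul_one_div]
      _ ≤ ENNReal.ofReal δ :=
          ENNReal.ofReal_le_ofReal (real_arith k m t s hm0 δ hδ hs hm htlog)
  -- Step 3: conclude
  have h1 : (1 : ℝ≥0∞) ≤ Measure.pi μ G + Measure.pi μ Gᶜ := by
    have := measure_union_le (μ := Measure.pi μ) G Gᶜ
    rwa [Set.union_compl_self, measure_univ] at this
  have h2 : Measure.pi μ Gᶜ ≤ ENNReal.ofReal δ :=
    le_trans (measure_mono hGood) hBadBound
  calc (1 : ℝ≥0∞) - ENNReal.ofReal δ ≤ 1 - Measure.pi μ Gᶜ := tsub_le_tsub_left h2 1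
    _ ≤ Measure.pi μ G := by
        rw [tsub_le_iff_right]
        exact h1
end

section
/- Let d, k, m, t, s be positive integers, δ ∈ (0,1), let w ∈ ℝ^s, and let A_1, …, A_s be nonempty subsets of [d]. Define g : {0,1}^d → ℝ by g(x) = Σ_{j=1}^s w_j · Π_{i ∈ A_j} x_i. Suppose m ≥ e·k and t ≥ ln(|A_1 ∪ ⋯ ∪ A_s| / δ), and let h_1, …, h_t : [d] → [m] be drawn independently, each from a pairwise independent distribution. For each j let T_{A_j} = {(h_r(i), r) : i ∈ A_j, r ∈ [t]}. Then for every x ∈ B_{d,k}, with probability at least 1 − δ over the draw of h_1, …, h_t, the single-hidden-layer ReLU network evaluated on Y = BSk_{h_{1:t}}(x) satisfies Σ_{j=1}^s w_j · ReLU( Σ_{(l,r) ∈ T_{A_j}} Y_{l,r} − (|T_{A_j}| − 1) ) = g(x). -/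
open MeasureTheory Finset
open scoped ENNReal NNReal BigOperators

/-- The set of sketch positions `T_A = {(h_r(i), r) : i ∈ A, r ∈ [t]}` read by
the hidden unit for the monomial over `A`. -/
def TSet {d m t : ℕ} (H : Fin t → Fin d → Fin m) (A : Finset (Fin d)) :
    Finset (Fin m × Fin t) :=
  (A ×ˢ (Finset.univ : Finset (Fin t))).image fun p => (H p.2 p.1, p.2)

/-- For a sparse polynomial `g(x) = ∑_j w j · ∏_{i ∈ A_j} x i`,
`m ≥ e·k` and `t ≥ ln(|⋃_j A_j| / δ)`, for every `x ∈ B_{d,k}`, with probability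
at least `1 − δ` over `t` independent pairwise-independent hashes, the
single-hidden-layer ReLU network
`∑_j w j · ReLU(∑_{(l,r) ∈ T_{A_j}} Y l r − (|T_{A_j}| − 1))` evaluated on
`Y = BSk_{h_{1:t}}(x)` equals `g(x)`. -/
theorem network_on_sketch_computes_sparse_polynomial
    (d k m t s : ℕ) (hd : 0 < d) (hk : 0 < k) (hm0 : 0 < m) (ht0 : 0 < t) (hs : 0 < s)
    (δ : ℝ) (hδ : 0 < δ) (hδ1 : δ < 1)
    (w : Fin s → ℝ)
    (A : Fin s → Finset (Fin d)) (hA : ∀ j, (A j).Nonempty)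
    (μ : Fin t → Measure (Fin d → Fin m))
    (hprob : ∀ j, IsProbabilityMeasure (μ j))
    (hpair : ∀ j, PairwiseIndepHash (μ j))
    (hm : Real.exp 1 * (k : ℝ) ≤ (m : ℝ))
    (htlog : Real.log (((Finset.univ.biUnion A).card : ℝ) / δ) ≤ (t : ℝ))
    (x : Fin d → Bool) (hxsparse : {i | x i = true}.ncard ≤ k) :
    1 - ENNReal.ofReal δ ≤
      Measure.pi μ {H : Fin t → Fin d → Fin m |
        (∑ j : Fin s, w j * max 0
            ((∑ p ∈ TSet H (A j), BSkR (H p.2) x p.1) - (((TSet H (A j)).card : ℝ) - 1)))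
          = ∑ j : Fin s, w j * ∏ i ∈ A j, (if x i then (1 : ℝ) else 0)} := by
  classical
  haveI : ∀ j, IsProbabilityMeasure (μ j) := hprob
  have meas : ∀ (E : Set (Fin t → Fin d → Fin m)), MeasurableSet E :=
    fun E => E.toFinite.measurableSet
  set S : Finset (Fin d) := Finset.univ.filter (fun i => x i = true) with hSdef
  have hScard : S.card ≤ k := by
    have hcoe : {i | x i = true} = (S : Set (Fin d)) := by ext i; simp [hSdef]
    rwa [hcoe, Set.ncard_coe_finset] at hxsparse
  set U : Finset (Fin d) := Finset.univ.biUnion A with hUdef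
  set B : Finset (Fin d) := U.filter (fun i => x i = false) with hBdef
  set Bad : Fin d → Set (Fin t → Fin d → Fin m) :=
    (fun i => {H | ∀ r, ∃ i' ∈ S, H r i' = H r i}) with hBadDef
  -- Step A : on the good event the network computes g exactly
  have stepA : (⋃ i ∈ B, Bad i)ᶜ ⊆ {H : Fin t → Fin d → Fin m |
      (∑ j : Fin s, w j * max 0
          ((∑ p ∈ TSet H (A j), BSkR (H p.2) x p.1) - (((TSet H (A j)).card : ℝ) - 1)))
        = ∑ j : Fin s, w j * ∏ i ∈ A j, (if x i then (1 : ℝ) else 0)} := by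
    intro H hH
    simp only [Set.mem_compl_iff, Set.mem_iUnion, not_exists] at hH
    show _ = _
    refine Finset.sum_congr rfl fun j _ => ?_
    congr 1
    by_cases hall : ∀ i ∈ A j, x i = true
    · have hprod : ∏ i ∈ A j, (if x i then (1:ℝ) else 0) = 1 :=
        Finset.prod_eq_one fun i hi => by simp [hall i hi]
      have hone : ∀ p ∈ TSet H (A j), BSkR (H p.2) x p.1 = 1 := by
        rintro p hp
        obtain ⟨⟨i, r⟩, hq, rfl⟩ := Finset.mem_image.mp hp
        have hi : i ∈ A j := (Finset.mem_product.mp hq).1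
        show (if ∃ i', H r i' = H r i ∧ x i' = true then (1:ℝ) else 0) = 1
        exact if_pos ⟨i, rfl, hall i hi⟩
      rw [hprod, Finset.sum_congr rfl hone, Finset.sum_const, nsmul_eq_mul, mul_one]
      norm_num
    · push_neg at hall
      obtain ⟨i0, hi0A, hi0x⟩ := hall
      have hi0x' : x i0 = false := by simpa using hi0x
      have hprod : ∏ i ∈ A j, (if x i then (1:ℝ) else 0) = 0 :=
        Finset.prod_eq_zero hi0A (by simp [hi0x'])
      have hi0B : i0 ∈ B := by
        refine Finset.mem_filter.mpr ⟨?_, hi0x'⟩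
        exact Finset.mem_biUnion.mpr ⟨j, Finset.mem_univ j, hi0A⟩
      have hnotbad : H ∉ Bad i0 := hH i0 hi0B
      simp only [hBadDef, Set.mem_setOf_eq, not_forall] at hnotbad
      obtain ⟨r, hr⟩ := hnotbad
      push_neg at hr
      have hp0mem : (H r i0, r) ∈ TSet H (A j) :=
        Finset.mem_image.mpr ⟨(i0, r), Finset.mem_product.mpr ⟨hi0A, Finset.mem_univ r⟩, rfl⟩
      have hY0 : BSkR (H r) x (H r i0) = 0 := by
        show (if ∃ i', H r i' = H r i0 ∧ x i' = true then (1:ℝ) else 0) = 0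
        rw [if_neg]
        rintro ⟨i', hi'h, hi'x⟩
        exact hr i' (Finset.mem_filter.mpr ⟨Finset.mem_univ i', hi'x⟩) hi'h
      have hle : ∑ p ∈ TSet H (A j), BSkR (H p.2) x p.1 ≤ ((TSet H (A j)).card : ℝ) - 1 := by
        rw [← Finset.sum_erase_add (TSet H (A j)) _ hp0mem]
        have hY0' : BSkR (H ((H r i0, r) : Fin m × Fin t).2) x ((H r i0, r) : Fin m × Fin t).1 = 0 := hY0
        rw [hY0', add_zero]
        have h1 : 1 ≤ (TSet H (A j)).card := Finset.card_pos.mpr ⟨_, hp0mem⟩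
        calc ∑ p ∈ (TSet H (A j)).erase (H r i0, r), BSkR (H p.2) x p.1
            ≤ ∑ p ∈ (TSet H (A j)).erase (H r i0, r), (1:ℝ) := by
              refine Finset.sum_le_sum fun p _ => ?_
              show (if ∃ i', H p.2 i' = p.1 ∧ x i' = true then (1:ℝ) else 0) ≤ 1
              split <;> norm_num
          _ = (((TSet H (A j)).erase (H r i0, r)).card : ℝ) := by simp
          _ = ((TSet H (A j)).card : ℝ) - 1 := by
              rw [Finset.card_erase_of_mem hp0mem, Nat.cast_sub h1, Nat.cast_one]
      rw [hprod, max_eq_left (by linarith)]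
  -- Step B : per-coordinate bad probability
  have hBadBound : ∀ i ∈ B, Measure.pi μ (Bad i) ≤ ((k : ℝ≥0∞) / m) ^ t := by
    intro i hiB
    have hix : x i = false := (Finset.mem_filter.mp hiB).2
    have hmne : (m : ℝ≥0∞) ≠ 0 := Nat.cast_ne_zero.mpr hm0.ne'
    have hmnetop : (m : ℝ≥0∞) ≠ ⊤ := ENNReal.natCast_ne_top m
    have hpieq : Bad i = Set.univ.pi (fun r => {h : Fin d → Fin m | ∃ i' ∈ S, h i' = h i}) := by
      ext H; simp [hBadDef, Set.mem_pi]
    rw [hpieq, Measure.pi_pi]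
    have hcoord : ∀ r : Fin t, μ r {h : Fin d → Fin m | ∃ i' ∈ S, h i' = h i}
        ≤ (k : ℝ≥0∞) / m := by
      intro r
      have hset : {h : Fin d → Fin m | ∃ i' ∈ S, h i' = h i}
          = ⋃ i' ∈ S, {h : Fin d → Fin m | h i' = h i} := by
        ext h; simp
      rw [hset]
      refine le_trans (measure_biUnion_finset_le _ _) ?_
      have hone : ∀ i' ∈ S, μ r {h : Fin d → Fin m | h i' = h i} ≤ 1 / (m : ℝ≥0∞) := by
        intro i' hi'
        have hxi' : x i' = true := (Finset.mem_filter.mp hi').2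
        have hne : i' ≠ i := by
          intro h; rw [h, hix] at hxi'; exact Bool.false_ne_true hxi'
        have hcup : {h : Fin d → Fin m | h i' = h i}
            = ⋃ a ∈ (Finset.univ : Finset (Fin m)), {h : Fin d → Fin m | h i' = a ∧ h i = a} := by
          ext h
          simp only [Set.mem_setOf_eq, Set.mem_iUnion, Finset.mem_univ, exists_true_left,
            exists_prop, true_and]
          constructor
          · intro he; exact ⟨h i, he, rfl⟩
          · rintro ⟨a, h1, h2⟩; rw [h1, h2]
        rw [hcup]
        refine le_trans (measure_biUnion_finset_le _ _) ?_
        have heach : ∀ a ∈ (Finset.univ : Finset (Fin m)),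
            μ r {h : Fin d → Fin m | h i' = a ∧ h i = a} = 1 / (m : ℝ≥0∞) ^ 2 :=
          fun a _ => hpair r i' i hne a a
        rw [Finset.sum_congr rfl heach, Finset.sum_const, nsmul_eq_mul]
        simp only [Finset.card_univ, Fintype.card_fin]
        rw [one_div, one_div, pow_two, ENNReal.mul_inv (Or.inl hmne) (Or.inl hmnetop),
          ← mul_assoc, ENNReal.mul_inv_cancel hmne hmnetop, one_mul]
      refine le_trans (Finset.sum_le_sum hone) ?_
      rw [Finset.sum_const, nsmul_eq_mul]
      calc (S.card : ℝ≥0∞) * (1 / m) ≤ (k : ℝ≥0∞) * (1 / m) :=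
            mul_le_mul_left (by exact_mod_cast hScard) _
        _ = (k : ℝ≥0∞) / m := by rw [mul_one_div]
    calc ∏ r : Fin t, μ r {h : Fin d → Fin m | ∃ i' ∈ S, h i' = h i}
        ≤ ∏ _r : Fin t, ((k : ℝ≥0∞) / m) := Finset.prod_le_prod' fun r _ => hcoord r
      _ = ((k : ℝ≥0∞) / m) ^ t := by simp [Finset.prod_const]
  -- Step B' : total bad probability ≤ δ
  have hreal : (U.card : ℝ) * ((k : ℝ) / m) ^ t ≤ δ := by
    rcases Nat.eq_zero_or_pos U.card with h0 | hpos
    · rw [h0]; simpa using hδ.le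
    · have hUc : (0:ℝ) < U.card := by exact_mod_cast hpos
      have hmR : (0:ℝ) < m := by exact_mod_cast hm0
      have hkm1 : (k : ℝ) / m ≤ Real.exp (-1) := by
        rw [div_le_iff₀ hmR, Real.exp_neg, inv_mul_eq_div, le_div_iff₀ (Real.exp_pos 1),
          mul_comm]
        exact hm
      have hpow : ((k : ℝ) / m) ^ t ≤ Real.exp (-(t:ℝ)) := by
        calc ((k : ℝ) / m) ^ t ≤ (Real.exp (-1)) ^ t :=
              pow_le_pow_left₀ (by positivity) hkm1 t
          _ = Real.exp (-(t:ℝ)) := by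
              rw [← Real.exp_nat_mul]; congr 1; ring
      have hexp : (U.card : ℝ) / δ ≤ Real.exp t := by
        calc (U.card : ℝ) / δ = Real.exp (Real.log ((U.card : ℝ) / δ)) :=
              (Real.exp_log (by positivity)).symm
          _ ≤ Real.exp t := Real.exp_le_exp.mpr htlog
      have h2 : (U.card : ℝ) ≤ Real.exp t * δ := (div_le_iff₀ hδ).mp hexp
      calc (U.card : ℝ) * ((k : ℝ) / m) ^ t ≤ (U.card : ℝ) * Real.exp (-(t:ℝ)) :=
            mul_le_mul_of_nonneg_left hpow hUc.le
        _ ≤ (Real.exp t * δ) * Real.exp (-(t:ℝ)) :=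
            mul_le_mul_of_nonneg_right h2 (Real.exp_pos _).le
        _ = δ := by
            rw [Real.exp_neg, mul_comm (Real.exp (t:ℝ)) δ, mul_assoc,
              mul_inv_cancel₀ (Real.exp_pos (t:ℝ)).ne', mul_one]
  have hunion : Measure.pi μ (⋃ i ∈ B, Bad i) ≤ ENNReal.ofReal δ := by
    refine le_trans (measure_biUnion_finset_le _ _) ?_
    refine le_trans (Finset.sum_le_sum hBadBound) ?_
    rw [Finset.sum_const, nsmul_eq_mul]
    have hBU : (B.card : ℝ≥0∞) ≤ (U.card : ℝ≥0∞) := by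
      exact_mod_cast Finset.card_filter_le _ _
    have hkm : ((k : ℝ≥0∞) / m) ^ t = ENNReal.ofReal (((k : ℝ) / m) ^ t) := by
      rw [ENNReal.ofReal_pow (by positivity),
        ENNReal.ofReal_div_of_pos (by exact_mod_cast hm0)]
      simp [ENNReal.ofReal_natCast]
    calc (B.card : ℝ≥0∞) * ((k : ℝ≥0∞) / m) ^ t
        ≤ (U.card : ℝ≥0∞) * ((k : ℝ≥0∞) / m) ^ t := mul_le_mul_left hBU _
      _ = ENNReal.ofReal ((U.card : ℝ) * ((k : ℝ) / m) ^ t) := by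
          rw [hkm, ← ENNReal.ofReal_natCast U.card, ← ENNReal.ofReal_mul (by positivity)]
      _ ≤ ENNReal.ofReal δ := ENNReal.ofReal_le_ofReal hreal
  -- combine
  have hcompl : Measure.pi μ ((⋃ i ∈ B, Bad i)ᶜ)
      = 1 - Measure.pi μ (⋃ i ∈ B, Bad i) := by
    rw [measure_compl (meas _) (measure_ne_top _ _), measure_univ]
  calc (1 : ℝ≥0∞) - ENNReal.ofReal δ
      ≤ 1 - Measure.pi μ (⋃ i ∈ B, Bad i) := tsub_le_tsub_left hunion 1
    _ = Measure.pi μ ((⋃ i ∈ B, Bad i)ᶜ) := hcompl.symm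
    _ ≤ _ := measure_mono stepA
end

section
/- Let d, k be positive integers. For every x ∈ B_{d,k} and every nonempty subset A ⊆ [d], Π_{j ∈ A} x_j = ReLU( DecPoly_{d,k}(DSk_{d,k}(x), A) ). -/
open Finset Polynomial
open scoped BigOperators

open Classical in
/-- The polynomial `p_x(z) = 1 − (k+1)·∏_{i : x_i = 1} (z − i)²`, where the
coordinates of `x` are indexed by the integers `1, …, d` (the index `i : Fin d`
corresponds to the integer `i + 1`).  Its degree is at most `2k` when `x` is
`k`-sparse. -/
noncomputable def pXPoly (d k : ℕ) (x : Fin d → ℝ) : Polynomial ℝ :=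
  1 - C ((k : ℝ) + 1) *
    ∏ i ∈ Finset.univ.filter (fun i => x i = 1), (X - C ((i : ℕ) + 1 : ℝ)) ^ 2

/-- The deterministic sketch `DSk_{d,k}(x) = (a_0(x), …, a_{2k}(x)) ∈ ℝ^{2k+1}`,
the coefficient vector of `p_x`. -/
noncomputable def DSk (d k : ℕ) (x : Fin d → ℝ) : Fin (2 * k + 1) → ℝ :=
  fun r => (pXPoly d k x).coeff (r : ℕ)

/-- `DecPoly_{d,k}(y, A) = (∑_{j ∈ A} ∑_{i=0}^{2k} y_i j^i) / |A|`, where index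
`j : Fin d` corresponds to the integer `j + 1`. -/
noncomputable def DecPoly (d k : ℕ) (y : Fin (2 * k + 1) → ℝ) (A : Finset (Fin d)) : ℝ :=
  (∑ j ∈ A, ∑ r : Fin (2 * k + 1), y r * ((j : ℕ) + 1 : ℝ) ^ (r : ℕ)) / (A.card : ℝ)

/-- For every `x ∈ B_{d,k}` and nonempty `A ⊆ [d]`,
`∏_{j ∈ A} x j = ReLU(DecPoly_{d,k}(DSk_{d,k}(x), A))`. -/
theorem prod_eq_relu_decPoly_dsk
    (d k : ℕ) (hd : 0 < d) (hk : 0 < k)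
    (x : Fin d → ℝ)
    (hxbin : ∀ i, x i = 0 ∨ x i = 1)
    (hxsparse : {i | x i ≠ 0}.ncard ≤ k)
    (A : Finset (Fin d)) (hA : A.Nonempty) :
    (∏ j ∈ A, x j) = max 0 (DecPoly d k (DSk d k x) A) := by
  classical
  set S := Finset.univ.filter (fun i => x i = 1) with hS
  have hScard : S.card ≤ k := by
    have hset : {i | x i ≠ 0} = ↑S := by
      ext i
      simp only [hS, Set.mem_setOf_eq, Finset.coe_filter, Finset.mem_univ, true_and,
        Set.mem_setOf_eq]
      constructor
      · intro h; rcases hxbin i with h0 | h1; · exact absurd h0 h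
        · exact h1
      · intro h; rw [h]; norm_num
    rwa [hset, Set.ncard_coe_finset] at hxsparse
  have hdeg : (pXPoly d k x).natDegree < 2 * k + 1 := by
    have h1 : (∏ i ∈ S, (X - C ((i : ℕ) + 1 : ℝ)) ^ 2).natDegree ≤ 2 * k := by
      refine le_trans (Polynomial.natDegree_prod_le _ _) ?_
      have he : ∀ i ∈ S, ((X - C ((i : ℕ) + 1 : ℝ)) ^ 2).natDegree = 2 := by
        intro i _
        rw [Polynomial.natDegree_pow, Polynomial.natDegree_X_sub_C]
      rw [Finset.sum_congr rfl he, Finset.sum_const, smul_eq_mul]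
      omega
    have h2 : (pXPoly d k x).natDegree ≤ 2 * k := by
      rw [pXPoly]
      refine le_trans (Polynomial.natDegree_sub_le _ _) ?_
      simp only [Polynomial.natDegree_one, max_le_iff]
      exact ⟨Nat.zero_le _, le_trans (Polynomial.natDegree_C_mul_le _ _) h1⟩
    omega
  have heval : ∀ j : Fin d,
      (∑ r : Fin (2 * k + 1), DSk d k x r * ((j : ℕ) + 1 : ℝ) ^ (r : ℕ))
        = 1 - ((k : ℝ) + 1) * ∏ i ∈ S, (((j : ℕ) + 1 : ℝ) - ((i : ℕ) + 1 : ℝ)) ^ 2 := by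
    intro j
    have h1 : (∑ r : Fin (2 * k + 1), DSk d k x r * ((j : ℕ) + 1 : ℝ) ^ (r : ℕ))
        = ∑ r ∈ Finset.range (2 * k + 1),
            (pXPoly d k x).coeff r * ((j : ℕ) + 1 : ℝ) ^ r :=
      Fin.sum_univ_eq_sum_range
        (fun r => (pXPoly d k x).coeff r * ((j : ℕ) + 1 : ℝ) ^ r) (2 * k + 1)
    rw [h1, ← Polynomial.eval_eq_sum_range' hdeg]
    simp only [pXPoly, ← hS, Polynomial.eval_sub, Polynomial.eval_one, Polynomial.eval_mul,
      Polynomial.eval_C, Polynomial.eval_prod, Polynomial.eval_pow, Polynomial.eval_X]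
  -- evaluation is 1 on S, at most -k off S
  have heval1 : ∀ j : Fin d, x j = 1 →
      (∑ r : Fin (2 * k + 1), DSk d k x r * ((j : ℕ) + 1 : ℝ) ^ (r : ℕ)) = 1 := by
    intro j hj
    rw [heval j]
    have hmem : j ∈ S := by simp [hS, hj]
    rw [Finset.prod_eq_zero hmem (by ring)]
    ring
  have heval0 : ∀ j : Fin d, x j ≠ 1 →
      (∑ r : Fin (2 * k + 1), DSk d k x r * ((j : ℕ) + 1 : ℝ) ^ (r : ℕ)) ≤ -(k : ℝ) := by
    intro j hj
    rw [heval j]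
    have hprod : (1 : ℝ) ≤ ∏ i ∈ S, (((j : ℕ) + 1 : ℝ) - ((i : ℕ) + 1 : ℝ)) ^ 2 := by
      have hle : ∀ i ∈ S, (1 : ℝ) ≤ (((j : ℕ) + 1 : ℝ) - ((i : ℕ) + 1 : ℝ)) ^ 2 := by
        intro i hi
        have hne : (i : ℕ) ≠ (j : ℕ) := by
          intro h
          apply hj
          have : i = j := Fin.ext h
          subst this
          exact (Finset.mem_filter.mp hi).2
        have hz : ((j : ℕ) : ℤ) - ((i : ℕ) : ℤ) ≠ 0 := by
          intro h; apply hne; omega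
        have h1 : (1 : ℤ) ≤ (((j : ℕ) : ℤ) - ((i : ℕ) : ℤ)) ^ 2 := by
          nlinarith [Int.one_le_abs hz, sq_abs (((j : ℕ) : ℤ) - ((i : ℕ) : ℤ)),
            abs_nonneg (((j : ℕ) : ℤ) - ((i : ℕ) : ℤ))]
        have hr : (1 : ℝ) ≤ (((j : ℕ) : ℝ) - ((i : ℕ) : ℝ)) ^ 2 := by exact_mod_cast h1
        calc (1 : ℝ) ≤ (((j : ℕ) : ℝ) - ((i : ℕ) : ℝ)) ^ 2 := hr
          _ = (((j : ℕ) + 1 : ℝ) - ((i : ℕ) + 1 : ℝ)) ^ 2 := by ring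
      calc (1 : ℝ) = ∏ _i ∈ S, (1 : ℝ) := by rw [Finset.prod_const_one]
        _ ≤ ∏ i ∈ S, (((j : ℕ) + 1 : ℝ) - ((i : ℕ) + 1 : ℝ)) ^ 2 :=
          Finset.prod_le_prod (fun i _ => zero_le_one) hle
    have hk1 : (1 : ℝ) ≤ (k : ℝ) + 1 := by
      nlinarith [Nat.cast_nonneg (α := ℝ) k]
    nlinarith
  by_cases hall : ∀ j ∈ A, x j = 1
  · have hprod : (∏ j ∈ A, x j) = 1 := Finset.prod_eq_one hall
    have hsum : (∑ j ∈ A, ∑ r : Fin (2 * k + 1),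
        DSk d k x r * ((j : ℕ) + 1 : ℝ) ^ (r : ℕ)) = (A.card : ℝ) := by
      rw [Finset.sum_congr rfl (fun j hj => heval1 j (hall j hj))]
      simp
    have hcard : (0 : ℝ) < (A.card : ℝ) := by
      exact_mod_cast Finset.card_pos.mpr hA
    rw [hprod, DecPoly, hsum, div_self (ne_of_gt hcard)]
    simp
  · push_neg at hall
    obtain ⟨j0, hj0A, hj0⟩ := hall
    have hprod : (∏ j ∈ A, x j) = 0 := by
      refine Finset.prod_eq_zero hj0A ?_
      rcases hxbin j0 with h | h
      · exact h
      · exact absurd h hj0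
    have hsum : (∑ j ∈ A, ∑ r : Fin (2 * k + 1),
        DSk d k x r * ((j : ℕ) + 1 : ℝ) ^ (r : ℕ)) ≤ 0 := by
      rw [← Finset.sum_filter_add_sum_filter_not A (fun j => x j = 1)]
      have h1 : (∑ j ∈ A.filter (fun j => x j = 1), ∑ r : Fin (2 * k + 1),
          DSk d k x r * ((j : ℕ) + 1 : ℝ) ^ (r : ℕ))
          = ((A.filter (fun j => x j = 1)).card : ℝ) := by
        rw [Finset.sum_congr rfl (fun j hj => heval1 j (Finset.mem_filter.mp hj).2)]
        simp
      have hc1 : ((A.filter (fun j => x j = 1)).card : ℝ) ≤ (k : ℝ) := by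
        have : (A.filter (fun j => x j = 1)).card ≤ S.card := by
          apply Finset.card_le_card
          intro i hi
          simp [hS, (Finset.mem_filter.mp hi).2]
        exact_mod_cast le_trans this hScard
      have h2 : (∑ j ∈ A.filter (fun j => ¬ x j = 1), ∑ r : Fin (2 * k + 1),
          DSk d k x r * ((j : ℕ) + 1 : ℝ) ^ (r : ℕ))
          ≤ ((A.filter (fun j => ¬ x j = 1)).card : ℝ) * (-(k : ℝ)) := by
        calc (∑ j ∈ A.filter (fun j => ¬ x j = 1), ∑ r : Fin (2 * k + 1),
            DSk d k x r * ((j : ℕ) + 1 : ℝ) ^ (r : ℕ))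
            ≤ ∑ _j ∈ A.filter (fun j => ¬ x j = 1), (-(k : ℝ)) := by
              exact Finset.sum_le_sum (fun j hj => heval0 j (Finset.mem_filter.mp hj).2)
          _ = ((A.filter (fun j => ¬ x j = 1)).card : ℝ) * (-(k : ℝ)) := by
              rw [Finset.sum_const, nsmul_eq_mul]
      have hc2 : (1 : ℝ) ≤ ((A.filter (fun j => ¬ x j = 1)).card : ℝ) := by
        have : 0 < (A.filter (fun j => ¬ x j = 1)).card := by
          apply Finset.card_pos.mpr
          exact ⟨j0, Finset.mem_filter.mpr ⟨hj0A, hj0⟩⟩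
        exact_mod_cast this
      have hk' : (0 : ℝ) < (k : ℝ) := by exact_mod_cast hk
      nlinarith [h2, hc1, hc2, hk']
    have hdec : DecPoly d k (DSk d k x) A ≤ 0 := by
      rw [DecPoly]
      apply div_nonpos_of_nonpos_of_nonneg hsum
      positivity
    rw [hprod, max_eq_left hdec]
end

section
/- Let d ≥ k ≥ 1 be integers and q a positive integer. Suppose Sk : B_{d,k} → ℝ^q is a mapping such that for every i ∈ [d] there exists w_i ∈ ℝ^q satisfying x_i = ReLU(⟨w_i, Sk(x)⟩) for every x ∈ B_{d,k}. Then q ≥ k. -/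
open Finset
open scoped BigOperators

/-- If `Sk : B_{d,k} → ℝ^q` is a sketch such that every single
coordinate `x i` can be decoded from `Sk x` by a linear functional followed by a
ReLU, then `q ≥ k`. -/
theorem sketch_dimension_lower_bound
    (d k q : ℕ) (hk : 1 ≤ k) (hkd : k ≤ d) (hq : 0 < q)
    (Sk : (Fin d → ℝ) → (Fin q → ℝ))
    (hdec : ∀ i : Fin d, ∃ w : Fin q → ℝ,
      ∀ x : Fin d → ℝ, (∀ i', x i' = 0 ∨ x i' = 1) → {i' | x i' ≠ 0}.ncard ≤ k →
        x i = max 0 (∑ j, w j * Sk x j)) :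
    k ≤ q := by
  -- embedding of Fin k into Fin d
  set emb : Fin k → Fin d := fun i => ⟨i.1, lt_of_lt_of_le i.2 hkd⟩ with hemb
  -- choose decoding vectors
  choose w hw using hdec
  set W : Fin k → (Fin q → ℝ) := fun i => w (emb i) with hWdef
  -- linear independence of W
  have hli : LinearIndependent ℝ W := by
    rw [Fintype.linearIndependent_iff]
    intro c hc
    -- the linear combination of W vanishes pointwise
    have hcz : ∀ j : Fin q, ∑ i, c i * W i j = 0 := by
      intro j
      have := congrFun hc j
      simpa using this
    -- for each subset S of Fin k, build the indicator vector
    have key : ∀ S : Finset (Fin k), ∃ a : Fin k → ℝ,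
        (∀ i ∈ S, a i = 1) ∧ (∀ i ∉ S, a i ≤ 0) ∧ ∑ i, c i * a i = 0 := by
      intro S
      set x : Fin d → ℝ := fun i' =>
        if h : i'.1 < k then (if (⟨i'.1, h⟩ : Fin k) ∈ S then 1 else 0) else 0 with hx
      have hbin : ∀ i', x i' = 0 ∨ x i' = 1 := by
        intro i'
        simp only [hx]
        split_ifs <;> simp
      have hxemb : ∀ i : Fin k, x (emb i) = if i ∈ S then 1 else 0 := by
        intro i
        simp only [hx, hemb]
        rw [dif_pos i.2]
      have hsupp : {i' | x i' ≠ 0}.ncard ≤ k := by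
        have hsub : {i' | x i' ≠ 0} ⊆ ↑(S.image emb) := by
          intro i' hi'
          simp only [Set.mem_setOf_eq, hx] at hi'
          by_cases h : i'.1 < k
          · rw [dif_pos h] at hi'
            by_cases hS : (⟨i'.1, h⟩ : Fin k) ∈ S
            · simp only [Finset.coe_image, Set.mem_image, Finset.mem_coe]
              exact ⟨⟨i'.1, h⟩, hS, rfl⟩
            · simp [hS] at hi'
          · simp [h] at hi'
        calc {i' | x i' ≠ 0}.ncard ≤ (↑(S.image emb) : Set (Fin d)).ncard :=
              Set.ncard_le_ncard hsub (Set.toFinite _)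
          _ = (S.image emb).card := Set.ncard_coe_finset _
          _ ≤ S.card := Finset.card_image_le
          _ ≤ k := le_trans (Finset.card_le_univ S) (by simp)
      set a : Fin k → ℝ := fun i => ∑ j, W i j * Sk x j with ha
      have hdecode : ∀ i : Fin k, x (emb i) = max 0 (a i) := fun i =>
        hw (emb i) x hbin hsupp
      refine ⟨a, ?_, ?_, ?_⟩
      · intro i hi
        have h1 : (1 : ℝ) = max 0 (a i) := by
          rw [← hdecode i, hxemb i, if_pos hi]
        rcases le_or_gt (a i) 0 with h | h
        · rw [max_eq_left h] at h1; norm_num at h1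
        · rw [max_eq_right h.le] at h1; exact h1.symm
      · intro i hi
        have h0 : (0 : ℝ) = max 0 (a i) := by
          rw [← hdecode i, hxemb i, if_neg hi]
        calc a i ≤ max 0 (a i) := le_max_right _ _
          _ = 0 := h0.symm
      · -- swap sums
        calc ∑ i, c i * a i = ∑ i, ∑ j, c i * (W i j * Sk x j) := by
              simp [ha, Finset.mul_sum]
          _ = ∑ j, ∑ i, c i * (W i j * Sk x j) := Finset.sum_comm
          _ = ∑ j : Fin q, (∑ i, c i * W i j) * Sk x j := by
              congr 1; ext j; rw [Finset.sum_mul]; congr 1; ext i; ring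
          _ = 0 := by simp [hcz]
    -- first: no positive coefficients
    have hpos : ∀ i, c i ≤ 0 := by
      obtain ⟨a, haS, haN, hsum⟩ := key (Finset.univ.filter (fun i => 0 < c i))
      by_contra hcon
      push_neg at hcon
      obtain ⟨i0, hi0⟩ := hcon
      have hsplit := Finset.sum_filter_add_sum_filter_not Finset.univ
        (fun i => 0 < c i) (fun i => c i * a i)
      rw [hsum] at hsplit
      have h1 : ∀ i ∈ Finset.univ.filter (fun i => 0 < c i), c i * a i = c i := by
        intro i hi; rw [haS i hi, mul_one]
      rw [Finset.sum_congr rfl h1] at hsplit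
      have h2 : 0 ≤ ∑ i ∈ Finset.univ.filter (fun i => ¬ 0 < c i), c i * a i := by
        apply Finset.sum_nonneg
        intro i hi
        have hci : c i ≤ 0 := by
          simp only [Finset.mem_filter] at hi; exact le_of_not_gt hi.2
        have hai : a i ≤ 0 := haN i (by simp [le_of_not_gt]; linarith)
        nlinarith
      have h3 : 0 < ∑ i ∈ Finset.univ.filter (fun i => 0 < c i), c i := by
        apply Finset.sum_pos
        · intro i hi; simp only [Finset.mem_filter] at hi; exact hi.2
        · exact ⟨i0, by simp [hi0]⟩
      linarith
    -- second: no negative coefficients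
    have hneg : ∀ i, 0 ≤ c i := by
      obtain ⟨a, haS, haN, hsum⟩ := key (Finset.univ.filter (fun i => c i < 0))
      by_contra hcon
      push_neg at hcon
      obtain ⟨i0, hi0⟩ := hcon
      have hsplit := Finset.sum_filter_add_sum_filter_not Finset.univ
        (fun i => c i < 0) (fun i => c i * a i)
      rw [hsum] at hsplit
      have h1 : ∀ i ∈ Finset.univ.filter (fun i => c i < 0), c i * a i = c i := by
        intro i hi; rw [haS i hi, mul_one]
      rw [Finset.sum_congr rfl h1] at hsplit
      have h2 : ∑ i ∈ Finset.univ.filter (fun i => ¬ c i < 0), c i * a i ≤ 0 := by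
        apply Finset.sum_nonpos
        intro i hi
        have hci : 0 ≤ c i := by
          simp only [Finset.mem_filter] at hi; exact le_of_not_gt hi.2
        have hai : a i ≤ 0 := haN i (by simp; linarith)
        exact mul_nonpos_of_nonneg_of_nonpos hci hai
      have h3 : ∑ i ∈ Finset.univ.filter (fun i => c i < 0), c i < 0 := by
        apply Finset.sum_neg
        · intro i hi; simp only [Finset.mem_filter] at hi; exact hi.2
        · exact ⟨i0, by simp [hi0]⟩
      linarith
    intro i
    exact le_antisymm (hpos i) (hneg i)
  have := hli.fintype_card_le_finrank
  simpa using this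
end

section
/- Let d, k, s be positive integers and w ∈ H_{d,s}. Then for every x ∈ B_{d,k}, the single-hidden-layer ReLU network on the deterministic sketch defined by N(y) = Σ_{i : w_i ≠ 0} w_i · ReLU( Σ_{r=0}^{2k} y_r · i^r ) satisfies N(DSk_{d,k}(x)) = w^⊤ x. -/
open Finset Polynomial
open scoped BigOperators

open Classical in
lemma pXPoly_natDegree_le (d k : ℕ) (x : Fin d → ℝ)
    (hxsparse : {i | x i ≠ 0}.ncard ≤ k)
    (hxbin : ∀ i, x i = 0 ∨ x i = 1) :
    (pXPoly d k x).natDegree ≤ 2 * k := by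
  have hcard : (Finset.univ.filter (fun i : Fin d => x i = 1)).card ≤ k := by
    have hset : {i : Fin d | x i ≠ 0} = ↑(Finset.univ.filter fun i => x i ≠ 0) := by
      ext i; simp
    rw [hset, Set.ncard_coe_finset] at hxsparse
    refine le_trans (Finset.card_le_card ?_) hxsparse
    intro i hi
    simp only [Finset.mem_filter, Finset.mem_univ, true_and] at hi ⊢
    rw [hi]; norm_num
  have hprod : (∏ i ∈ Finset.univ.filter (fun i : Fin d => x i = 1),
      (X - C ((i : ℕ) + 1 : ℝ)) ^ 2).natDegree ≤ 2 * k := by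
    refine le_trans (Polynomial.natDegree_prod_le _ _) ?_
    calc (∑ i ∈ Finset.univ.filter (fun i : Fin d => x i = 1),
          ((X - C ((i : ℕ) + 1 : ℝ)) ^ 2).natDegree)
        ≤ ∑ _i ∈ Finset.univ.filter (fun i : Fin d => x i = 1), 2 := by
          refine Finset.sum_le_sum fun i _ => ?_
          refine le_trans (Polynomial.natDegree_pow_le) ?_
          rw [Polynomial.natDegree_X_sub_C]
      _ = 2 * (Finset.univ.filter (fun i : Fin d => x i = 1)).card := by
          simp [Finset.sum_const, mul_comm]
      _ ≤ 2 * k := by omega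
  unfold pXPoly
  refine le_trans (Polynomial.natDegree_sub_le _ _) ?_
  simp only [Polynomial.natDegree_one, max_le_iff]
  constructor
  · omega
  · refine le_trans (Polynomial.natDegree_mul_le) ?_
    rw [Polynomial.natDegree_C]
    omega

open Classical in
/-- For `w ∈ H_{d,s}`, the one-hidden-layer ReLU network
`N(y) = ∑_{i : w i ≠ 0} w i · ReLU(∑_{r=0}^{2k} y_r · i^r)` satisfies
`N(DSk_{d,k}(x)) = wᵀx` for every `x ∈ B_{d,k}`. -/
theorem network_on_dsk_computes_sparse_linear
    (d k s : ℕ) (hd : 0 < d) (hk : 0 < k) (hs : 0 < s)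
    (w : Fin d → ℝ) (hw : {i | w i ≠ 0}.ncard ≤ s)
    (x : Fin d → ℝ)
    (hxbin : ∀ i, x i = 0 ∨ x i = 1)
    (hxsparse : {i | x i ≠ 0}.ncard ≤ k) :
    (∑ i ∈ Finset.univ.filter fun i => w i ≠ 0,
        w i * max 0 (∑ r : Fin (2 * k + 1),
          DSk d k x r * ((i : ℕ) + 1 : ℝ) ^ (r : ℕ)))
      = ∑ i, w i * x i := by
  have hdeg := pXPoly_natDegree_le d k x hxsparse hxbin
  -- the sum is the evaluation
  have hsum : ∀ z : ℝ, (∑ r : Fin (2 * k + 1),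
      DSk d k x r * z ^ (r : ℕ)) = (pXPoly d k x).eval z := by
    intro z
    simp only [DSk]
    rw [Fin.sum_univ_eq_sum_range (fun r => (pXPoly d k x).coeff r * z ^ r)]
    rw [Polynomial.eval_eq_sum_range' (n := 2*k+1) (by omega)]
  have heval : ∀ z : ℝ, (pXPoly d k x).eval z =
      1 - ((k : ℝ) + 1) * ∏ i ∈ Finset.univ.filter (fun i : Fin d => x i = 1),
        (z - ((i : ℕ) + 1 : ℝ)) ^ 2 := by
    intro z; simp [pXPoly, Polynomial.eval_prod]
  have hkey : ∀ i : Fin d, max 0 ((pXPoly d k x).eval ((i : ℕ) + 1 : ℝ)) = x i := by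
    intro i
    rcases hxbin i with h0 | h1
    · -- x i = 0 : product ≥ 1, eval ≤ -k ≤ 0
      rw [h0]
      have hprod : (1 : ℝ) ≤ ∏ j ∈ Finset.univ.filter (fun j : Fin d => x j = 1),
          (((i : ℕ) + 1 : ℝ) - ((j : ℕ) + 1 : ℝ)) ^ 2 := by
        have hstep : ∀ j ∈ Finset.univ.filter (fun j : Fin d => x j = 1),
            (1:ℝ) ≤ (((i : ℕ) + 1 : ℝ) - ((j : ℕ) + 1 : ℝ)) ^ 2 := by
          intro j hj
          simp only [Finset.mem_filter, Finset.mem_univ, true_and] at hj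
          have hij : (i : ℕ) ≠ (j : ℕ) := by
            intro h
            have : i = j := Fin.ext h
            rw [this, hj] at h0; norm_num at h0
          have : (1 : ℝ) ≤ |((i : ℕ) : ℝ) - ((j : ℕ) : ℝ)| := by
            have : ((i : ℕ) : ℤ) ≠ ((j : ℕ) : ℤ) := by exact_mod_cast hij
            have h1 : (1 : ℤ) ≤ |((i : ℕ) : ℤ) - ((j : ℕ) : ℤ)| :=
              Int.one_le_abs (sub_ne_zero.mpr this)
            have := (by exact_mod_cast h1 : (1 : ℝ) ≤ |(((i : ℕ) : ℤ) : ℝ) - (((j : ℕ) : ℤ) : ℝ)|)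
            simpa using this
          calc (1:ℝ) = 1 ^ 2 := by norm_num
            _ ≤ |((i : ℕ) : ℝ) - ((j : ℕ) : ℝ)| ^ 2 := by
                exact pow_le_pow_left₀ (by norm_num) this 2
            _ = (((i : ℕ) + 1 : ℝ) - ((j : ℕ) + 1 : ℝ)) ^ 2 := by
                rw [sq_abs]; ring_nf
        calc (1:ℝ) = ∏ _j ∈ Finset.univ.filter (fun j : Fin d => x j = 1), (1:ℝ) := by simp
          _ ≤ _ := Finset.prod_le_prod (fun j _ => zero_le_one) hstep
      rw [heval]
      have hk1 : (1 : ℝ) ≤ (k : ℝ) + 1 := by have := Nat.cast_nonneg (α := ℝ) k; linarith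
      have hk0 : (0:ℝ) ≤ (k : ℝ) + 1 := by positivity
      have : ((k : ℝ) + 1) * 1 ≤ ((k : ℝ) + 1) *
          ∏ j ∈ Finset.univ.filter (fun j : Fin d => x j = 1),
            (((i : ℕ) + 1 : ℝ) - ((j : ℕ) + 1 : ℝ)) ^ 2 :=
        mul_le_mul_of_nonneg_left hprod hk0
      rw [max_eq_left]
      nlinarith
    · -- x i = 1 : product = 0, eval = 1
      rw [h1, heval]
      have hzero : ∏ j ∈ Finset.univ.filter (fun j : Fin d => x j = 1),
          (((i : ℕ) + 1 : ℝ) - ((j : ℕ) + 1 : ℝ)) ^ 2 = 0 := by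
        apply Finset.prod_eq_zero (i := i)
        · simp [h1]
        · ring_nf
      rw [hzero]; norm_num
  have hterm : ∀ i : Fin d,
      w i * max 0 (∑ r : Fin (2 * k + 1),
          DSk d k x r * ((i : ℕ) + 1 : ℝ) ^ (r : ℕ)) = w i * x i := by
    intro i; rw [hsum, hkey]
  calc (∑ i ∈ Finset.univ.filter fun i => w i ≠ 0,
        w i * max 0 (∑ r : Fin (2 * k + 1),
          DSk d k x r * ((i : ℕ) + 1 : ℝ) ^ (r : ℕ)))
      = ∑ i ∈ Finset.univ.filter fun i => w i ≠ 0, w i * x i := by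
        exact Finset.sum_congr rfl fun i _ => hterm i
    _ = ∑ i, w i * x i := by
        refine Finset.sum_filter_of_ne fun i _ h => ?_
        intro hwi; rw [hwi] at h; simp at h
end

section
/- Let d, k, s be positive integers, let w ∈ ℝ^s, and let A_1, …, A_s be nonempty subsets of [d]. Define g : {0,1}^d → ℝ by g(x) = Σ_{j=1}^s w_j · Π_{i ∈ A_j} x_i. Then for every x ∈ B_{d,k}, Σ_{j=1}^s w_j · ReLU( DecPoly_{d,k}(DSk_{d,k}(x), A_j) ) = g(x). -/
open Finset Polynomial
open scoped BigOperators

/-- For the sparse polynomial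
`g(x) = ∑_j w j · ∏_{i ∈ A_j} x i`, the one-hidden-layer ReLU network on the
deterministic sketch satisfies
`∑_j w j · ReLU(DecPoly_{d,k}(DSk_{d,k}(x), A_j)) = g(x)` for all `x ∈ B_{d,k}`. -/
theorem network_on_dsk_computes_sparse_polynomial
    (d k s : ℕ) (hd : 0 < d) (hk : 0 < k) (hs : 0 < s)
    (w : Fin s → ℝ)
    (A : Fin s → Finset (Fin d)) (hA : ∀ j, (A j).Nonempty)
    (x : Fin d → ℝ)
    (hxbin : ∀ i, x i = 0 ∨ x i = 1)
    (hxsparse : {i | x i ≠ 0}.ncard ≤ k) :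
    (∑ j : Fin s, w j * max 0 (DecPoly d k (DSk d k x) (A j)))
      = ∑ j : Fin s, w j * ∏ i ∈ A j, x i := by
  classical
  set S := Finset.univ.filter (fun i : Fin d => x i = 1) with hS
  have hScard : S.card ≤ k := by
    have hset : ({i | x i ≠ 0} : Set (Fin d)) = ↑S := by
      ext i
      simp only [Set.mem_setOf_eq, hS, Finset.coe_filter, Finset.mem_univ, true_and,
        Set.mem_setOf_eq]
      constructor
      · intro h; rcases hxbin i with h0 | h1
        · exact absurd h0 h
        · exact h1
      · intro h; rw [h]; norm_num
    rwa [hset, Set.ncard_coe_finset] at hxsparse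
  have hdeg : (pXPoly d k x).natDegree < 2 * k + 1 := by
    have h1 : (C ((k : ℝ) + 1) *
        ∏ i ∈ S, (X - C ((i : ℕ) + 1 : ℝ)) ^ 2).natDegree ≤ 2 * k := by
      refine le_trans (natDegree_C_mul_le _ _) ?_
      refine le_trans (natDegree_prod_le _ _) ?_
      have : ∀ i ∈ S, ((X - C ((i : ℕ) + 1 : ℝ)) ^ 2).natDegree = 2 := by
        intro i _
        rw [natDegree_pow, natDegree_X_sub_C]
      rw [Finset.sum_congr rfl this, Finset.sum_const, smul_eq_mul, mul_comm]
      omega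
    have : (pXPoly d k x).natDegree ≤ 2 * k := by
      unfold pXPoly
      refine le_trans (natDegree_sub_le _ _) ?_
      simp only [natDegree_one, max_le_iff]
      exact ⟨Nat.zero_le _, h1⟩
    omega
  have heval : ∀ j : Fin d,
      (∑ r : Fin (2 * k + 1), DSk d k x r * ((j : ℕ) + 1 : ℝ) ^ (r : ℕ))
        = (pXPoly d k x).eval ((j : ℕ) + 1 : ℝ) := by
    intro j
    simp only [DSk]
    rw [Fin.sum_univ_eq_sum_range (fun r => (pXPoly d k x).coeff r * ((j : ℕ) + 1 : ℝ) ^ r)]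
    exact (Polynomial.eval_eq_sum_range' hdeg _).symm
  have hevalP : ∀ j : Fin d, (pXPoly d k x).eval ((j : ℕ) + 1 : ℝ)
      = 1 - ((k : ℝ) + 1) * ∏ i ∈ S, (((j : ℕ) + 1 : ℝ) - ((i : ℕ) + 1)) ^ 2 := by
    intro j
    simp [pXPoly, eval_prod, hS]
  have hval1 : ∀ j : Fin d, x j = 1 → (pXPoly d k x).eval ((j : ℕ) + 1 : ℝ) = 1 := by
    intro j hj
    have hjS : j ∈ S := by simp [hS, hj]
    have hz : ∏ i ∈ S, (((j : ℕ) + 1 : ℝ) - ((i : ℕ) + 1)) ^ 2 = 0 :=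
      Finset.prod_eq_zero hjS (by ring)
    rw [hevalP, hz]; ring
  have hval0 : ∀ j : Fin d, x j = 0 → (pXPoly d k x).eval ((j : ℕ) + 1 : ℝ) ≤ -(k : ℝ) := by
    intro j hj
    have hprod : (1 : ℝ) ≤ ∏ i ∈ S, (((j : ℕ) + 1 : ℝ) - ((i : ℕ) + 1)) ^ 2 := by
      refine le_trans (le_of_eq (by simp : (1:ℝ) = ∏ _i ∈ S, (1:ℝ)))
        (Finset.prod_le_prod (fun i _ => zero_le_one) ?_)
      intro i hi
      have hxi : x i = 1 := by
        simpa [hS] using hi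
      have hne : ((j : ℕ) : ℤ) - ((i : ℕ) : ℤ) ≠ 0 := by
        intro h
        have : (j : ℕ) = (i : ℕ) := by omega
        have : j = i := Fin.ext this
        rw [this, hxi] at hj; norm_num at hj
      have h1 : (1 : ℤ) ≤ (((j : ℕ) : ℤ) - ((i : ℕ) : ℤ)) ^ 2 := by
        nlinarith [Int.one_le_abs hne, sq_abs (((j : ℕ) : ℤ) - ((i : ℕ) : ℤ)),
          abs_nonneg (((j : ℕ) : ℤ) - ((i : ℕ) : ℤ))]
      have hcast : (((j : ℕ) + 1 : ℝ) - ((i : ℕ) + 1)) ^ 2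
          = (((((j : ℕ) : ℤ) - ((i : ℕ) : ℤ)) ^ 2 : ℤ) : ℝ) := by
        push_cast; ring
      rw [hcast]; exact_mod_cast h1
    rw [hevalP]
    have hk1 : (0 : ℝ) < (k : ℝ) + 1 := by positivity
    nlinarith
  refine Finset.sum_congr rfl (fun j _ => ?_)
  congr 1
  have hBcardpos : (0 : ℝ) < ((A j).card : ℝ) := by
    exact_mod_cast Finset.card_pos.mpr (hA j)
  have hDec : DecPoly d k (DSk d k x) (A j)
      = (∑ t ∈ A j, (pXPoly d k x).eval ((t : ℕ) + 1 : ℝ)) / ((A j).card : ℝ) := by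
    unfold DecPoly
    rw [Finset.sum_congr rfl (fun t _ => heval t)]
  by_cases hall : ∀ i ∈ A j, x i = 1
  · have hprod : ∏ i ∈ A j, x i = 1 := Finset.prod_eq_one hall
    have hsum : (∑ t ∈ A j, (pXPoly d k x).eval ((t : ℕ) + 1 : ℝ)) = ((A j).card : ℝ) := by
      rw [Finset.sum_congr rfl (fun t ht => hval1 t (hall t ht))]
      simp
    rw [hprod, hDec, hsum, div_self (ne_of_gt hBcardpos)]
    simp
  · push_neg at hall
    obtain ⟨i₀, hi₀B, hi₀⟩ := hall
    have hxi0 : x i₀ = 0 := (hxbin i₀).resolve_right hi₀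
    have hprod : ∏ i ∈ A j, x i = 0 := Finset.prod_eq_zero hi₀B hxi0
    set B1 := (A j).filter (fun t => x t = 1) with hB1
    set B0 := (A j).filter (fun t => ¬ x t = 1) with hB0
    have hsplit : (∑ t ∈ A j, (pXPoly d k x).eval ((t : ℕ) + 1 : ℝ))
        = (∑ t ∈ B1, (pXPoly d k x).eval ((t : ℕ) + 1 : ℝ))
          + ∑ t ∈ B0, (pXPoly d k x).eval ((t : ℕ) + 1 : ℝ) :=
      (Finset.sum_filter_add_sum_filter_not _ _ _).symm
    have hsum1 : (∑ t ∈ B1, (pXPoly d k x).eval ((t : ℕ) + 1 : ℝ)) = (B1.card : ℝ) := by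
      rw [Finset.sum_congr rfl (fun t ht => hval1 t (Finset.mem_filter.mp ht).2)]
      simp [hB1]
    have hsum0 : (∑ t ∈ B0, (pXPoly d k x).eval ((t : ℕ) + 1 : ℝ)) ≤ (B0.card : ℝ) * (-(k : ℝ)) := by
      rw [← nsmul_eq_mul]
      apply Finset.sum_le_card_nsmul
      intro t ht
      have := (Finset.mem_filter.mp ht).2
      exact hval0 t ((hxbin t).resolve_right this)
    have hB1card : (B1.card : ℝ) ≤ (k : ℝ) := by
      have : B1 ⊆ S := by
        intro t ht
        simp [hS, (Finset.mem_filter.mp ht).2]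
      have := le_trans (Finset.card_le_card this) hScard
      exact_mod_cast this
    have hB0card : (1 : ℝ) ≤ (B0.card : ℝ) := by
      have : i₀ ∈ B0 := Finset.mem_filter.mpr ⟨hi₀B, hi₀⟩
      have := Finset.card_pos.mpr ⟨i₀, this⟩
      exact_mod_cast this
    have hsum : (∑ t ∈ A j, (pXPoly d k x).eval ((t : ℕ) + 1 : ℝ)) ≤ 0 := by
      rw [hsplit]
      have hkR : (1 : ℝ) ≤ (k : ℝ) := by exact_mod_cast hk
      nlinarith
    rw [hprod, hDec]
    exact max_eq_left (div_nonpos_of_nonpos_of_nonneg hsum (le_of_lt hBcardpos))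
end

section
/- Let d ≥ s ≥ 1 be integers and q a positive integer. Suppose there exist maps φ : B_{d,1} → ℝ^q and ψ : B_{d,s} → ℝ^q such that for every x ∈ B_{d,1} and every w ∈ B_{d,s}, the real numbers w^⊤x − 1/2 and ψ(w)^⊤ φ(x) are either both strictly positive or both strictly negative. Then q ≥ s. -/
open Finset
open scoped BigOperators

/-- (Zero-error lower bound for proper learning.)
If there are embeddings `φ : B_{d,1} → ℝ^q` and `ψ : B_{d,s} → ℝ^q` such that for
every `x ∈ B_{d,1}` and `w ∈ B_{d,s}` the numbers `wᵀx − 1/2` and `ψ(w)ᵀφ(x)` are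
either both strictly positive or both strictly negative, then `q ≥ s`. -/
theorem proper_learning_dimension_lower_bound
    (d s q : ℕ) (hs : 1 ≤ s) (hsd : s ≤ d) (hq : 0 < q)
    (φ ψ : (Fin d → ℝ) → (Fin q → ℝ))
    (hsep : ∀ x : Fin d → ℝ, (∀ i, x i = 0 ∨ x i = 1) → {i | x i ≠ 0}.ncard ≤ 1 →
      ∀ w : Fin d → ℝ, (∀ i, w i = 0 ∨ w i = 1) → {i | w i ≠ 0}.ncard ≤ s →
        (0 < (∑ i, w i * x i) - 1 / 2 ∧ 0 < ∑ j, ψ w j * φ x j) ∨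
        ((∑ i, w i * x i) - 1 / 2 < 0 ∧ (∑ j, ψ w j * φ x j) < 0)) :
    s ≤ q := by
  classical
  set c : Fin s → Fin d := fun i => Fin.castLE hsd i with hc
  have hcinj : Function.Injective c := Fin.castLE_injective hsd
  set x : Fin s → (Fin d → ℝ) := fun i j => if j = c i then 1 else 0 with hx
  have hx01 : ∀ i j, x i j = 0 ∨ x i j = 1 := by
    intro i j; simp only [hx]; split_ifs <;> simp
  have hxcard : ∀ i, {j | x i j ≠ 0}.ncard ≤ 1 := by
    intro i
    have : {j | x i j ≠ 0} = {c i} := by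
      ext j; simp only [hx, Set.mem_setOf_eq, Set.mem_singleton_iff]
      split_ifs with h <;> simp [h]
    rw [this, Set.ncard_singleton]
  have hli : LinearIndependent ℝ (fun i => φ (x i)) := by
    rw [Fintype.linearIndependent_iff]
    intro g hg i
    by_contra hgi
    set w : Fin d → ℝ :=
      fun j => if h : (j : ℕ) < s then (if 0 < g ⟨j, h⟩ then 1 else 0) else 0 with hw
    have hw01 : ∀ j, w j = 0 ∨ w j = 1 := by
      intro j; simp only [hw]; split_ifs <;> simp
    have hwcard : {j | w j ≠ 0}.ncard ≤ s := by
      have hsub : {j | w j ≠ 0} ⊆ Set.range c := by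
        intro j hj
        simp only [Set.mem_setOf_eq, hw] at hj
        by_cases h : (j : ℕ) < s
        · exact ⟨⟨j, h⟩, Fin.ext rfl⟩
        · simp [h] at hj
      calc {j | w j ≠ 0}.ncard ≤ (Set.range c).ncard :=
            Set.ncard_le_ncard hsub (Set.finite_range c)
        _ = (c '' Set.univ).ncard := by rw [Set.image_univ]
        _ = (Set.univ : Set (Fin s)).ncard := Set.ncard_image_of_injective _ hcinj
        _ = s := by simp [Set.ncard_univ]
    have hdot : ∀ i', ∑ j, w j * x i' j = if 0 < g i' then 1 else 0 := by
      intro i'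
      have h1 : ∑ j, w j * x i' j = w (c i') := by
        simp [hx, mul_ite, mul_one, mul_zero]
      rw [h1]
      have hlt : ((c i' : Fin d) : ℕ) < s := i'.isLt
      simp only [hw]
      rw [dif_pos hlt]
      congr 1
    have hsign : ∀ i', (0 < g i' → 0 < ∑ j, ψ w j * φ (x i') j) ∧
        (g i' < 0 → (∑ j, ψ w j * φ (x i') j) < 0) := by
      intro i'
      have hkey := hsep (x i') (hx01 i') (hxcard i') w hw01 hwcard
      rw [hdot i'] at hkey
      constructor
      · intro hpos
        rw [if_pos hpos] at hkey
        rcases hkey with ⟨_, h2⟩ | ⟨h1, _⟩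
        · exact h2
        · norm_num at h1
      · intro hneg
        rw [if_neg (by linarith)] at hkey
        rcases hkey with ⟨h1, _⟩ | ⟨_, h2⟩
        · norm_num at h1
        · exact h2
    have hzero : ∀ j, ∑ i', g i' * φ (x i') j = 0 := by
      intro j
      have := congrFun hg j
      simpa [Finset.sum_apply, Pi.smul_apply, smul_eq_mul] using this
    have hsum0 : ∑ i', g i' * (∑ j, ψ w j * φ (x i') j) = 0 := by
      calc ∑ i', g i' * ∑ j, ψ w j * φ (x i') j
          = ∑ j, ψ w j * ∑ i', g i' * φ (x i') j := by
            simp_rw [Finset.mul_sum]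
            rw [Finset.sum_comm]
            apply Finset.sum_congr rfl
            intro j _
            apply Finset.sum_congr rfl
            intro i' _
            ring
        _ = 0 := by simp [hzero]
    have hnonneg : ∀ i' ∈ Finset.univ, 0 ≤ g i' * (∑ j, ψ w j * φ (x i') j) := by
      intro i' _
      rcases lt_trichotomy (g i') 0 with h | h | h
      · exact le_of_lt (mul_pos_of_neg_of_neg h ((hsign i').2 h))
      · simp [h]
      · exact le_of_lt (mul_pos h ((hsign i').1 h))
    have hstrict : 0 < g i * (∑ j, ψ w j * φ (x i) j) := by
      rcases lt_trichotomy (g i) 0 with h | h | h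
      · exact mul_pos_of_neg_of_neg h ((hsign i).2 h)
      · exact absurd h hgi
      · exact mul_pos h ((hsign i).1 h)
    have : 0 < ∑ i', g i' * (∑ j, ψ w j * φ (x i') j) :=
      Finset.sum_pos' hnonneg ⟨i, Finset.mem_univ i, hstrict⟩
    rw [hsum0] at this
    exact lt_irrefl 0 this
  have := hli.fintype_card_le_finrank
  simpa using this
end

section
/- Let d, k, m, t be positive integers, let c > 0 and ε > 0, and let x ∈ ℝ⁺_{d,k,c}. Suppose m ≥ e·(k + 1/ε), and h_1, …, h_t : [d] → [m] are drawn independently, each from a pairwise independent distribution. Then for every index i ∈ [d], the probability that DecMin(Sk_{h_{1:t}}(x), i) ∉ [x_i, x_i + ε·c] is at most e^{−t}. -/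
open MeasureTheory Finset
open scoped ENNReal NNReal BigOperators

/-- `x` has an `ℓ₁` tail bound: `‖tail_k(x)‖₁ ≤ c`, i.e. some `k`-sparse vector
`y` satisfies `‖x - y‖₁ ≤ c`. -/
def TailBound {d : ℕ} (k : ℕ) (c : ℝ) (x : Fin d → ℝ) : Prop :=
  ∃ y : Fin d → ℝ, {i | y i ≠ 0}.ncard ≤ k ∧ (∑ i, |x i - y i|) ≤ c

lemma coll_prob {d m : ℕ} (hm0 : 0 < m) (ν : Measure (Fin d → Fin m))
    (hpair : PairwiseIndepHash ν) {i i' : Fin d} (hne : i' ≠ i) :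
    ν {h | h i' = h i} = 1 / (m : ℝ≥0∞) := by
  have hmne : (m : ℝ≥0∞) ≠ 0 := by exact_mod_cast hm0.ne'
  have : {h : Fin d → Fin m | h i' = h i} = ⋃ a : Fin m, {h | h i = a ∧ h i' = a} := by
    ext h; simp [eq_comm]
  rw [this, measure_iUnion ?_ (fun a => Set.to_countable _ |>.measurableSet)]
  · rw [tsum_fintype]
    simp only [hpair i i' (Ne.symm hne)]
    rw [Finset.sum_const, card_univ, Fintype.card_fin, pow_two, nsmul_eq_mul,
      one_div, ENNReal.mul_inv (Or.inl hmne) (Or.inl (by simp)), ← mul_assoc,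
      ENNReal.mul_inv_cancel hmne (by simp), one_mul, one_div]
  · intro a b hab
    simp only [Set.disjoint_left]
    rintro h ⟨h1, -⟩ ⟨h2, -⟩
    exact hab (h1 ▸ h2 ▸ rfl)

lemma single_hash {d k m : ℕ} (hm0 : 0 < m) (c ε : ℝ) (hc : 0 < c) (hε : 0 < ε)
    (x : Fin d → ℝ) (hxpos : ∀ i, 0 ≤ x i) (hxtail : TailBound k c x)
    (ν : Measure (Fin d → Fin m)) [IsProbabilityMeasure ν]
    (hpair : PairwiseIndepHash ν)
    (hm : Real.exp 1 * ((k : ℝ) + 1 / ε) ≤ (m : ℝ)) (i : Fin d) :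
    ν {h | x i + ε * c < Dec (Sk h x) i h} ≤ ENNReal.ofReal (Real.exp (-1)) := by
  classical
  obtain ⟨y, hycard, hyc⟩ := hxtail
  set S : Finset (Fin d) := (Finset.univ.filter (fun i' => y i' ≠ 0)).erase i with hS
  have hScard : S.card ≤ k := by
    refine le_trans (Finset.card_erase_le) ?_
    have : {i | y i ≠ 0} = ↑(Finset.univ.filter (fun i' => y i' ≠ 0)) := by ext; simp
    rw [this, Set.ncard_coe_finset] at hycard
    exact hycard
  set Sc : Finset (Fin d) := (Finset.univ.erase i) \ S with hSc
  -- the ENNReal tail function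
  set f : (Fin d → Fin m) → ℝ≥0∞ :=
    fun h => ∑ i' ∈ Sc, if h i' = h i then ENNReal.ofReal |x i' - y i'| else 0 with hf
  -- inclusion
  have hincl : {h : Fin d → Fin m | x i + ε * c < Dec (Sk h x) i h} ⊆
      (⋃ i' ∈ S, {h | h i' = h i}) ∪ {h | ENNReal.ofReal (ε * c) ≤ f h} := by
    intro h hh
    simp only [Set.mem_setOf_eq] at hh
    by_cases hcoll : ∃ i' ∈ S, h i' = h i
    · left; simpa using hcoll
    · right
      push_neg at hcoll
      -- Dec = x i + sum over others colliding
      have hdec : Dec (Sk h x) i h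
          = x i + ∑ i' ∈ (Finset.univ.erase i).filter (fun i' => h i' = h i), x i' := by
        rw [Dec, Sk]
        rw [show (Finset.univ.filter (fun i' => h i' = h i))
            = insert i ((Finset.univ.erase i).filter (fun i' => h i' = h i)) by
          ext j; by_cases hj : j = i <;> simp [hj]]
        rw [Finset.sum_insert (by simp)]
      have hsum : ε * c < ∑ i' ∈ (Finset.univ.erase i).filter (fun i' => h i' = h i), x i' := by
        rw [hdec] at hh; linarith
      -- colliding set avoids S
      have hsub : (Finset.univ.erase i).filter (fun i' => h i' = h i) ⊆
          Sc.filter (fun i' => h i' = h i) := by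
        intro j hj
        simp only [Finset.mem_filter, Finset.mem_erase, hSc, Finset.mem_sdiff] at hj ⊢
        exact ⟨⟨hj.1, fun hjS => hcoll j hjS hj.2⟩, hj.2⟩
      have hle : ∑ i' ∈ (Finset.univ.erase i).filter (fun i' => h i' = h i), x i'
          ≤ ∑ i' ∈ Sc.filter (fun i' => h i' = h i), |x i' - y i'| := by
        refine le_trans (Finset.sum_le_sum_of_subset_of_nonneg hsub
          (fun j _ _ => hxpos j)) ?_
        refine Finset.sum_le_sum (fun j hj => ?_)
        have hjy : y j = 0 := by
          simp only [Finset.mem_filter, hSc, Finset.mem_sdiff, Finset.mem_erase, hS] at hj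
          by_contra hy
          exact hj.1.2 (by simp [Finset.mem_erase, hj.1.1.1, hy])
        rw [hjy, sub_zero, abs_of_nonneg (hxpos j)]
      show ENNReal.ofReal (ε * c) ≤ f h
      rw [hf]
      have : f h = ENNReal.ofReal (∑ i' ∈ Sc.filter (fun i' => h i' = h i), |x i' - y i'|) := by
        rw [hf, ENNReal.ofReal_sum_of_nonneg (fun j _ => abs_nonneg _), Finset.sum_filter]
      rw [← hf, this]
      exact ENNReal.ofReal_le_ofReal (le_trans (le_of_lt hsum) hle)
  have hmne : (m : ℝ≥0∞) ≠ 0 := by exact_mod_cast hm0.ne'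
  have hmR : (0:ℝ) < m := by exact_mod_cast hm0
  -- union bound on heavy collisions
  have hunion : ν (⋃ i' ∈ S, {h : Fin d → Fin m | h i' = h i}) ≤ (k : ℝ≥0∞) * (1 / m) := by
    refine le_trans (measure_biUnion_finset_le _ _) ?_
    have : ∀ i' ∈ S, ν {h : Fin d → Fin m | h i' = h i} = 1 / (m : ℝ≥0∞) :=
      fun i' hi' => coll_prob hm0 ν hpair (Finset.ne_of_mem_erase hi')
    rw [Finset.sum_congr rfl this, Finset.sum_const, nsmul_eq_mul]
    exact mul_le_mul_left (by exact_mod_cast hScard) _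
  -- Markov on the tail
  have hfmeas : Measurable f := fun s _ => (Set.to_countable _).measurableSet
  have hlint : ∫⁻ h, f h ∂ν ≤ ENNReal.ofReal c * (1 / m) := by
    rw [hf]
    rw [lintegral_finset_sum _ (fun i' _ => by
      exact Measurable.ite (Set.to_countable _ |>.measurableSet (s := {h : Fin d → Fin m | h i' = h i}))
        measurable_const measurable_const)]
    have heach : ∀ i' ∈ Sc, (∫⁻ h, (if h i' = h i then ENNReal.ofReal |x i' - y i'| else 0) ∂ν)
        = ENNReal.ofReal |x i' - y i'| * (1 / m) := by
      intro i' hi'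
      have hii : i' ≠ i := by
        simp only [hSc, Finset.mem_sdiff, Finset.mem_erase] at hi'
        exact hi'.1.1
      have : (fun h : Fin d → Fin m => if h i' = h i then ENNReal.ofReal |x i' - y i'| else 0)
          = Set.indicator {h | h i' = h i} (fun _ => ENNReal.ofReal |x i' - y i'|) := by
        ext h; rw [Set.indicator_apply]; rfl
      rw [this, lintegral_indicator_const (Set.to_countable _ |>.measurableSet),
        coll_prob hm0 ν hpair hii]
    rw [Finset.sum_congr rfl heach, ← Finset.sum_mul]
    refine mul_le_mul_left ?_ _
    rw [← ENNReal.ofReal_sum_of_nonneg (fun j _ => abs_nonneg _)]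
    refine ENNReal.ofReal_le_ofReal (le_trans ?_ hyc)
    exact Finset.sum_le_sum_of_subset_of_nonneg (Finset.subset_univ _)
      (fun j _ _ => abs_nonneg _)
  have hmarkov : ν {h | ENNReal.ofReal (ε * c) ≤ f h}
      ≤ (ENNReal.ofReal c * (1 / m)) / ENNReal.ofReal (ε * c) := by
    rw [ENNReal.le_div_iff_mul_le (Or.inl (by simp [ENNReal.ofReal_eq_zero]; nlinarith))
      (Or.inl ENNReal.ofReal_ne_top), mul_comm]
    exact le_trans (mul_meas_ge_le_lintegral₀ hfmeas.aemeasurable _) hlint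
  refine le_trans (measure_mono hincl) (le_trans (measure_union_le _ _) ?_)
  refine le_trans (add_le_add hunion hmarkov) ?_
  -- arithmetic
  have h1m : (1 / (m:ℝ≥0∞)) = ENNReal.ofReal (1/(m:ℝ)) := by
    rw [ENNReal.ofReal_div_of_pos hmR, ENNReal.ofReal_one, ENNReal.ofReal_natCast]
  rw [h1m, ← ENNReal.ofReal_natCast k, ← ENNReal.ofReal_mul (by positivity),
    ← ENNReal.ofReal_mul (le_of_lt hc), ← ENNReal.ofReal_div_of_pos (by positivity),
    ← ENNReal.ofReal_add (by positivity) (by positivity)]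
  refine ENNReal.ofReal_le_ofReal ?_
  have he := Real.exp_pos 1
  have key : ((k:ℝ) * (1/m) + c * (1/m) / (ε*c)) = ((k:ℝ) + 1/ε) / m := by
    field_simp
  rw [key, div_le_iff₀ hmR, Real.exp_neg]
  nlinarith [mul_le_mul_of_nonneg_left hm (le_of_lt (inv_pos.mpr he)),
    inv_mul_cancel₀ he.ne', mul_pos (inv_pos.mpr he) (mul_pos he (by positivity : (0:ℝ) < (k:ℝ) + 1/ε))]

/-- For nonnegative `x ∈ ℝ⁺_{d,k,c}`, `m ≥ e·(k + 1/ε)`, and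
`t` independent pairwise-independent hashes, for every `i`,
`Pr[DecMin(Sk_{h_{1:t}}(x), i) ∉ [x i, x i + ε·c]] ≤ e^{-t}`. -/
theorem decMin_interval_error_le_exp_neg_t
    (d k m t : ℕ) (hd : 0 < d) (hk : 0 < k) (hm0 : 0 < m) (ht0 : 0 < t)
    (c ε : ℝ) (hc : 0 < c) (hε : 0 < ε)
    (x : Fin d → ℝ) (hxpos : ∀ i, 0 ≤ x i) (hxtail : TailBound k c x)
    (μ : Fin t → Measure (Fin d → Fin m))
    (hprob : ∀ j, IsProbabilityMeasure (μ j))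
    (hpair : ∀ j, PairwiseIndepHash (μ j))
    (hm : Real.exp 1 * ((k : ℝ) + 1 / ε) ≤ (m : ℝ))
    (i : Fin d) :
    Measure.pi μ {H : Fin t → Fin d → Fin m |
        DecMin H x i ∉ Set.Icc (x i) (x i + ε * c)}
      ≤ ENNReal.ofReal (Real.exp (-(t : ℝ))) := by
  haveI := hprob
  haveI : Nonempty (Fin t) := ⟨⟨0, ht0⟩⟩
  set S : Fin t → Set (Fin d → Fin m) :=
    fun _ => {h | x i + ε * c < Dec (Sk h x) i h} with hSdef
  have hge : ∀ (h : Fin d → Fin m), x i ≤ Dec (Sk h x) i h := by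
    intro h
    rw [Dec, Sk]
    exact Finset.single_le_sum (f := x) (fun j _ => hxpos j) (by simp)
  have hsub : {H : Fin t → Fin d → Fin m | DecMin H x i ∉ Set.Icc (x i) (x i + ε * c)}
      ⊆ Set.pi Set.univ S := by
    intro H hH
    simp only [Set.mem_setOf_eq, Set.mem_Icc, not_and_or, not_le] at hH
    have hDM : x i ≤ DecMin H x i := le_ciInf (fun j => hge (H j))
    have hgt : x i + ε * c < DecMin H x i := by
      rcases hH with h1 | h2
      · linarith
      · exact h2
    intro j _
    exact lt_of_lt_of_le hgt (ciInf_le (Set.Finite.bddBelow (Set.finite_range _)) j)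
  refine le_trans (measure_mono hsub) ?_
  rw [Measure.pi_pi]
  have hbound : ∀ j ∈ Finset.univ, μ j (S j) ≤ ENNReal.ofReal (Real.exp (-1)) :=
    fun j _ => single_hash hm0 c ε hc hε x hxpos hxtail (μ j) (hpair j) hm i
  refine le_trans (Finset.prod_le_prod' hbound) ?_
  rw [Finset.prod_const, Finset.card_univ, Fintype.card_fin,
    ← ENNReal.ofReal_pow (Real.exp_nonneg _), ← Real.exp_nat_mul]
  refine ENNReal.ofReal_le_ofReal (le_of_eq ?_)
  congr 1
  push_cast
  ring
end

section
/- Let d, k, m be positive integers, let c > 0 and ε > 0, let x ∈ ℝ⁺_{d,k,c}, and let h : [d] → [m] be a random hash function drawn from a pairwise independent distribution with m ≥ e·(k + 1/ε). Then for every index i ∈ [d]: Dec(Sk_h(x), i; h) ≥ x_i always holds, and the probability that Dec(Sk_h(x), i; h) > x_i + ε·c is at most 1/e. -/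
open MeasureTheory Finset
open scoped ENNReal NNReal BigOperators

/-- For nonnegative `x ∈ ℝ⁺_{d,k,c}` and a pairwise-independent
hash into `m ≥ e·(k + 1/ε)` buckets: `Dec(Sk_h(x), i; h) ≥ x i` always, and
`Pr[Dec(Sk_h(x), i; h) > x i + ε·c] ≤ 1/e`. -/
theorem dec_overestimate_and_error_le_inv_e
    (d k m : ℕ) (hd : 0 < d) (hk : 0 < k) (hm0 : 0 < m)
    (c ε : ℝ) (hc : 0 < c) (hε : 0 < ε)
    (x : Fin d → ℝ) (hxpos : ∀ i, 0 ≤ x i) (hxtail : TailBound k c x)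
    (μ : Measure (Fin d → Fin m))
    (hprob : IsProbabilityMeasure μ)
    (hpair : PairwiseIndepHash μ)
    (hm : Real.exp 1 * ((k : ℝ) + 1 / ε) ≤ (m : ℝ))
    (i : Fin d) :
    (∀ h : Fin d → Fin m, x i ≤ Dec (Sk h x) i h) ∧
    μ {h : Fin d → Fin m | x i + ε * c < Dec (Sk h x) i h}
      ≤ ENNReal.ofReal (1 / Real.exp 1) := by

  obtain ⟨y, hycard, hysum⟩ := hxtail
  have measAll : ∀ s : Set (Fin d → Fin m), MeasurableSet s :=
    fun s => (Set.toFinite s).measurableSet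
  have hdec : ∀ h : Fin d → Fin m, Dec (Sk h x) i h
      = ∑ j ∈ Finset.univ.filter (fun j => h j = h i), x j := fun h => rfl
  have part1 : ∀ h : Fin d → Fin m, x i ≤ Dec (Sk h x) i h := by
    intro h
    rw [hdec]
    exact Finset.single_le_sum (fun j _ => hxpos j) (by simp)
  refine ⟨part1, ?_⟩
  set S : Finset (Fin d) := Finset.univ.filter (fun j => j ≠ i ∧ y j ≠ 0) with hS
  have hScard : (S.card : ℝ≥0∞) ≤ (k : ℝ≥0∞) := by
    have h1 : S.card ≤ k := by
      calc S.card ≤ (Set.toFinite {j | y j ≠ 0}).toFinset.card := by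
            apply Finset.card_le_card
            intro j hj
            simp only [hS, Finset.mem_filter, Finset.mem_univ, true_and] at hj
            simpa using hj.2
        _ = {j | y j ≠ 0}.ncard := (Set.ncard_eq_toFinset_card _ _).symm
        _ ≤ k := hycard
    exact_mod_cast h1
  have hm' : (m : ℝ≥0∞) ≠ 0 := by exact_mod_cast hm0.ne'
  have hmt : (m : ℝ≥0∞) ≠ ⊤ := ENNReal.natCast_ne_top m
  have hcol : ∀ j : Fin d, j ≠ i → μ {h : Fin d → Fin m | h j = h i} = ((m : ℝ≥0∞))⁻¹ := by
    intro j hj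
    have hU : {h : Fin d → Fin m | h j = h i}
        = ⋃ a : Fin m, {h : Fin d → Fin m | h j = a ∧ h i = a} := by
      ext h
      simp only [Set.mem_setOf_eq, Set.mem_iUnion]
      constructor
      · intro he; exact ⟨h i, he, rfl⟩
      · rintro ⟨a, h1, h2⟩; rw [h1, h2]
    have hdisj : Pairwise (Function.onFun Disjoint
        (fun a : Fin m => {h : Fin d → Fin m | h j = a ∧ h i = a})) := by
      intro a b hab
      simp only [Function.onFun, Set.disjoint_left, Set.mem_setOf_eq]
      rintro h ⟨h1, h2⟩ ⟨h3, h4⟩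
      exact hab (h2.symm.trans h4)
    rw [hU, measure_iUnion hdisj (fun _ => measAll _)]
    have hconst : ∀ a : Fin m,
        μ {h : Fin d → Fin m | h j = a ∧ h i = a} = 1 / (m : ℝ≥0∞) ^ 2 :=
      fun a => hpair j i hj a a
    rw [tsum_congr hconst, tsum_fintype]
    simp only [Finset.sum_const, Finset.card_univ, Fintype.card_fin, nsmul_eq_mul]
    rw [one_div, sq, ENNReal.mul_inv (Or.inl hm') (Or.inl hmt), ← mul_assoc,
      ENNReal.mul_inv_cancel hm' hmt, one_mul]
  set L : Finset (Fin d) := Finset.univ.filter (fun j => j ≠ i ∧ y j = 0) with hL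
  set A : Set (Fin d → Fin m) := ⋃ j ∈ S, {h : Fin d → Fin m | h j = h i} with hA
  set B : Set (Fin d → Fin m) :=
    {h : Fin d → Fin m | ε * c < ∑ j ∈ L, if h j = h i then x j else 0} with hB
  have hsub : {h : Fin d → Fin m | x i + ε * c < Dec (Sk h x) i h} ⊆ A ∪ B := by
    intro h hh
    simp only [Set.mem_setOf_eq] at hh
    by_cases hA' : h ∈ A
    · exact Or.inl hA'
    · right
      have hnoS : ∀ j ∈ S, h j ≠ h i := by
        intro j hj hcontra
        exact hA' (Set.mem_biUnion hj hcontra)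
      have hdec2 : Dec (Sk h x) i h
          = x i + ∑ j ∈ Finset.univ.filter (fun j => j ≠ i ∧ h j = h i), x j := by
        rw [hdec]
        rw [← Finset.add_sum_erase _ _
          (show i ∈ Finset.univ.filter (fun j => h j = h i) by simp)]
        congr 1
        apply Finset.sum_congr _ (fun _ _ => rfl)
        ext j
        simp [Finset.mem_erase, and_comm]
      rw [hdec2] at hh
      have hgt : ε * c < ∑ j ∈ Finset.univ.filter (fun j => j ≠ i ∧ h j = h i), x j := by
        linarith
      have hEq : Finset.univ.filter (fun j => j ≠ i ∧ h j = h i)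
          = L.filter (fun j => h j = h i) := by
        ext j
        simp only [hL, Finset.mem_filter, Finset.mem_univ, true_and]
        constructor
        · rintro ⟨hji, hcol'⟩
          refine ⟨⟨hji, ?_⟩, hcol'⟩
          by_contra hy0
          exact hnoS j (by simp [hS, hji, hy0]) hcol'
        · rintro ⟨⟨hji, _⟩, hcol'⟩; exact ⟨hji, hcol'⟩
      rw [hEq, Finset.sum_filter] at hgt
      exact hgt
  have hAbound : μ A ≤ (k : ℝ≥0∞) * ((m : ℝ≥0∞))⁻¹ := by
    calc μ A ≤ ∑ j ∈ S, μ {h : Fin d → Fin m | h j = h i} :=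
          measure_biUnion_finset_le S _
      _ = ∑ j ∈ S, ((m : ℝ≥0∞))⁻¹ := by
          apply Finset.sum_congr rfl
          intro j hj
          have hji : j ≠ i := by
            simp only [hS, Finset.mem_filter, Finset.mem_univ, true_and] at hj
            exact hj.1
          exact hcol j hji
      _ = (S.card : ℝ≥0∞) * ((m : ℝ≥0∞))⁻¹ := by
          rw [Finset.sum_const, nsmul_eq_mul]
      _ ≤ (k : ℝ≥0∞) * ((m : ℝ≥0∞))⁻¹ := by gcongr
  have hmeasg : AEMeasurable
      (fun h : Fin d → Fin m =>
        ENNReal.ofReal (∑ j ∈ L, if h j = h i then x j else 0)) μ :=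
    (measurable_of_countable _).aemeasurable
  have hεc0 : (0 : ℝ) < ε * c := mul_pos hε hc
  have hεc : ENNReal.ofReal (ε * c) ≠ 0 := (ENNReal.ofReal_pos.mpr hεc0).ne'
  have hBsub : B ⊆ {h : Fin d → Fin m | ENNReal.ofReal (ε * c)
      ≤ ENNReal.ofReal (∑ j ∈ L, if h j = h i then x j else 0)} := by
    intro h hh
    simp only [hB, Set.mem_setOf_eq] at hh ⊢
    exact ENNReal.ofReal_le_ofReal hh.le
  have hlint : ∫⁻ h, ENNReal.ofReal (∑ j ∈ L, if h j = h i then x j else 0) ∂μ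
      ≤ ENNReal.ofReal c * ((m : ℝ≥0∞))⁻¹ := by
    have heq : ∀ h : Fin d → Fin m,
        ENNReal.ofReal (∑ j ∈ L, if h j = h i then x j else 0)
        = ∑ j ∈ L, Set.indicator {h' : Fin d → Fin m | h' j = h' i}
            (fun _ => ENNReal.ofReal (x j)) h := by
      intro h
      rw [ENNReal.ofReal_sum_of_nonneg (fun j _ => by
        by_cases hcase : h j = h i <;> simp [hcase, hxpos j])]
      apply Finset.sum_congr rfl
      intro j _
      by_cases hcase : h j = h i <;> simp [Set.indicator, hcase]
    calc ∫⁻ h, ENNReal.ofReal (∑ j ∈ L, if h j = h i then x j else 0) ∂μ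
        = ∑ j ∈ L, ENNReal.ofReal (x j) * μ {h' : Fin d → Fin m | h' j = h' i} := by
          simp_rw [heq]
          rw [lintegral_finset_sum _ (fun j _ => measurable_of_countable _)]
          exact Finset.sum_congr rfl fun j _ => lintegral_indicator_const (measAll _) _
      _ = ∑ j ∈ L, ENNReal.ofReal (x j) * ((m : ℝ≥0∞))⁻¹ := by
          apply Finset.sum_congr rfl
          intro j hj
          have hji : j ≠ i := by
            simp only [hL, Finset.mem_filter, Finset.mem_univ, true_and] at hj
            exact hj.1
          rw [hcol j hji]
      _ = (∑ j ∈ L, ENNReal.ofReal (x j)) * ((m : ℝ≥0∞))⁻¹ := by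
          rw [Finset.sum_mul]
      _ ≤ ENNReal.ofReal c * ((m : ℝ≥0∞))⁻¹ := by
          gcongr
          rw [← ENNReal.ofReal_sum_of_nonneg (fun j _ => hxpos j)]
          apply ENNReal.ofReal_le_ofReal
          calc ∑ j ∈ L, x j = ∑ j ∈ L, |x j - y j| := by
                apply Finset.sum_congr rfl
                intro j hj
                have hyj : y j = 0 := by
                  simp only [hL, Finset.mem_filter, Finset.mem_univ, true_and] at hj
                  exact hj.2
                rw [hyj, sub_zero, abs_of_nonneg (hxpos j)]
            _ ≤ ∑ j, |x j - y j| :=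
                Finset.sum_le_sum_of_subset_of_nonneg (Finset.subset_univ _)
                  (fun j _ _ => abs_nonneg _)
            _ ≤ c := hysum
  have hBbound : μ B ≤ (ENNReal.ofReal c * ((m : ℝ≥0∞))⁻¹) / ENNReal.ofReal (ε * c) := by
    calc μ B ≤ μ {h : Fin d → Fin m | ENNReal.ofReal (ε * c)
          ≤ ENNReal.ofReal (∑ j ∈ L, if h j = h i then x j else 0)} :=
          measure_mono hBsub
      _ ≤ (∫⁻ h, ENNReal.ofReal (∑ j ∈ L, if h j = h i then x j else 0) ∂μ)
            / ENNReal.ofReal (ε * c) :=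
          meas_ge_le_lintegral_div hmeasg hεc ENNReal.ofReal_ne_top
      _ ≤ _ := by gcongr
  have hm0' : (0 : ℝ) < m := by exact_mod_cast hm0
  have e_pos := Real.exp_pos 1
  have hminv : ((m : ℝ≥0∞))⁻¹ = ENNReal.ofReal ((m : ℝ))⁻¹ := by
    rw [ENNReal.ofReal_inv_of_pos hm0', ENNReal.ofReal_natCast]
  have hk' : (k : ℝ≥0∞) = ENNReal.ofReal (k : ℝ) := (ENNReal.ofReal_natCast k).symm
  have final : (k : ℝ≥0∞) * ((m : ℝ≥0∞))⁻¹
      + (ENNReal.ofReal c * ((m : ℝ≥0∞))⁻¹) / ENNReal.ofReal (ε * c)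
      ≤ ENNReal.ofReal (1 / Real.exp 1) := by
    rw [hminv, hk', ← ENNReal.ofReal_mul (by positivity),
      ← ENNReal.ofReal_mul hc.le, ← ENNReal.ofReal_div_of_pos hεc0,
      ← ENNReal.ofReal_add (by positivity)
        (div_nonneg (mul_nonneg hc.le (by positivity)) hεc0.le)]
    apply ENNReal.ofReal_le_ofReal
    have key : (k : ℝ) * (m : ℝ)⁻¹ + c * (m : ℝ)⁻¹ / (ε * c) = ((k : ℝ) + 1 / ε) / m := by
      field_simp
    rw [key, div_le_div_iff₀ hm0' e_pos]
    nlinarith [hm]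
  calc μ {h : Fin d → Fin m | x i + ε * c < Dec (Sk h x) i h}
      ≤ μ (A ∪ B) := measure_mono hsub
    _ ≤ μ A + μ B := measure_union_le A B
    _ ≤ (k : ℝ≥0∞) * ((m : ℝ≥0∞))⁻¹
        + (ENNReal.ofReal c * ((m : ℝ≥0∞))⁻¹) / ENNReal.ofReal (ε * c) :=
        add_le_add hAbound hBbound
    _ ≤ ENNReal.ofReal (1 / Real.exp 1) := final
end

section
/- Let x ∈ ℝ^d, let i ∈ [d], let d' be a positive integer, and fix nonzero real numbers g_1, …, g_{d'} (the i-th column of the projection matrix). Let the remaining matrix entries G_{j,i'} for j ∈ [d'] and i' ≠ i be independent Gaussian random variables with mean 0 and variance 1/d', and set y_j = g_j x_i + Σ_{i' ≠ i} G_{j,i'} x_{i'}. Define the estimator x̂_i = ( Σ_{j=1}^{d'} g_j y_j ) / ( Σ_{j=1}^{d'} g_j² ). Then E[x̂_i] = x_i and Var(x̂_i) = ‖x − x_i e_i‖₂² / ( d' · Σ_{j=1}^{d'} g_j² ). -/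
open MeasureTheory ProbabilityTheory Finset
open scoped ENNReal NNReal BigOperators

section Helpers
open Real

lemma my_integral_mul_exp_neg_mul_sq {b : ℝ} (hb : 0 < b) :
    ∫ x : ℝ, x * Real.exp (-b * x ^ 2) = 0 := by
  have hderiv : ∀ x : ℝ, HasDerivAt (fun t : ℝ => -(2 * b)⁻¹ * Real.exp (-b * t ^ 2))
      (x * Real.exp (-b * x ^ 2)) x := by
    intro x
    have h1 : HasDerivAt (fun t : ℝ => -b * t ^ 2) (-b * (2 * x)) x := by
      simpa using ((hasDerivAt_pow 2 x).const_mul (-b))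
    have h2 := (h1.exp).const_mul (-(2 * b)⁻¹)
    refine h2.congr_deriv ?_
    field_simp
  exact MeasureTheory.integral_eq_zero_of_hasDerivAt_of_integrable hderiv
    (integrable_mul_exp_neg_mul_sq hb)
    ((integrable_exp_neg_mul_sq hb).const_mul _)

lemma my_integrable_sq_mul_exp_neg_mul_sq {b : ℝ} (hb : 0 < b) :
    Integrable (fun x : ℝ => x ^ 2 * Real.exp (-b * x ^ 2)) := by
  have h := integrable_rpow_mul_exp_neg_mul_sq hb (by norm_num : (-1:ℝ) < 2)
  have h2 : ∀ x : ℝ, x ^ (2:ℝ) = x ^ 2 := fun x => by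
    rw [show (2:ℝ) = ((2:ℕ):ℝ) by norm_num, Real.rpow_natCast]
  simpa [h2] using h

lemma my_integral_sq_mul_exp_neg_mul_sq {b : ℝ} (hb : 0 < b) :
    ∫ x : ℝ, x ^ 2 * Real.exp (-b * x ^ 2) = Real.sqrt (π / b) / (2 * b) := by
  have hsq := my_integrable_sq_mul_exp_neg_mul_sq hb
  have hderiv : ∀ x : ℝ, HasDerivAt (fun t : ℝ => t * Real.exp (-b * t ^ 2))
      (Real.exp (-b * x ^ 2) - 2 * b * (x ^ 2 * Real.exp (-b * x ^ 2))) x := by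
    intro x
    have h1 : HasDerivAt (fun t : ℝ => -b * t ^ 2) (-b * (2 * x)) x := by
      simpa using ((hasDerivAt_pow 2 x).const_mul (-b))
    have h2 := (hasDerivAt_id x).mul h1.exp
    refine h2.congr_deriv ?_
    simp
    ring
  have h0 := MeasureTheory.integral_eq_zero_of_hasDerivAt_of_integrable hderiv
    ((integrable_exp_neg_mul_sq hb).sub (hsq.const_mul (2 * b)))
    (integrable_mul_exp_neg_mul_sq hb)
  rw [integral_sub (integrable_exp_neg_mul_sq hb) (hsq.const_mul (2 * b)),
    integral_const_mul, integral_gaussian] at h0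
  have hb' : (2 : ℝ) * b ≠ 0 := by positivity
  field_simp at h0 ⊢
  linarith

lemma my_gaussianPDFReal_eq (v : ℝ≥0) (x : ℝ) :
    gaussianPDFReal 0 v x
      = (Real.sqrt (2 * π * v))⁻¹ * Real.exp (-(2 * (v:ℝ))⁻¹ * x ^ 2) := by
  rw [gaussianPDFReal]
  congr 1
  rw [sub_zero, div_eq_mul_inv]
  ring

lemma my_gaussianReal_integral (v : ℝ≥0) (hv : v ≠ 0) (f : ℝ → ℝ) :
    ∫ x, f x ∂(gaussianReal 0 v) = ∫ x, gaussianPDFReal 0 v x * f x := by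
  rw [gaussianReal_of_var_ne_zero 0 hv]
  rw [show (volume.withDensity (gaussianPDF 0 v))
      = volume.withDensity (fun x => ((gaussianPDFReal 0 v x).toNNReal : ℝ≥0∞)) from rfl]
  rw [integral_withDensity_eq_integral_smul ((measurable_gaussianPDFReal 0 v).real_toNNReal) f]
  congr 1 with x
  simp [NNReal.smul_def, Real.coe_toNNReal _ (gaussianPDFReal_nonneg 0 v x)]

lemma my_gaussianReal_integrable (v : ℝ≥0) (hv : v ≠ 0) (f : ℝ → ℝ)
    (h : Integrable (fun x => gaussianPDFReal 0 v x * f x)) :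
    Integrable f (gaussianReal 0 v) := by
  rw [gaussianReal_of_var_ne_zero 0 hv]
  rw [show (volume.withDensity (gaussianPDF 0 v))
      = volume.withDensity (fun x => ((gaussianPDFReal 0 v x).toNNReal : ℝ≥0∞)) from rfl]
  rw [integrable_withDensity_iff_integrable_smul ((measurable_gaussianPDFReal 0 v).real_toNNReal)]
  have : (fun x => ((gaussianPDFReal 0 v x).toNNReal : ℝ≥0) • f x)
      = fun x => gaussianPDFReal 0 v x * f x := by
    funext x
    simp [NNReal.smul_def, Real.coe_toNNReal _ (gaussianPDFReal_nonneg 0 v x)]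
  rw [this]
  exact h

section moments

variable {v : ℝ≥0} (hv : v ≠ 0)

lemma my_hvR (hv : v ≠ 0) : (0:ℝ) < (v:ℝ) := by positivity
lemma my_hb (hv : v ≠ 0) : (0:ℝ) < (2 * (v:ℝ))⁻¹ := by
  have := my_hvR hv; positivity

include hv

lemma my_gauss_integral_id : ∫ x, x ∂(gaussianReal 0 v) = 0 := by
  rw [my_gaussianReal_integral v hv]
  have : (fun x : ℝ => gaussianPDFReal 0 v x * x)
      = fun x => (Real.sqrt (2 * π * v))⁻¹ * (x * Real.exp (-(2 * (v:ℝ))⁻¹ * x ^ 2)) := by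
    funext x; rw [my_gaussianPDFReal_eq]; ring
  rw [this, integral_const_mul, my_integral_mul_exp_neg_mul_sq (my_hb hv), mul_zero]

lemma my_gauss_integrable_sq :
    Integrable (fun x : ℝ => x ^ 2) (gaussianReal 0 v) := by
  apply my_gaussianReal_integrable v hv
  have : (fun x : ℝ => gaussianPDFReal 0 v x * x ^ 2)
      = fun x => (Real.sqrt (2 * π * v))⁻¹ * (x ^ 2 * Real.exp (-(2 * (v:ℝ))⁻¹ * x ^ 2)) := by
    funext x; rw [my_gaussianPDFReal_eq]; ring
  rw [this]
  exact (my_integrable_sq_mul_exp_neg_mul_sq (my_hb hv)).const_mul _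

lemma my_gauss_memℒp_two : MemLp (fun x : ℝ => x) 2 (gaussianReal 0 v) := by
  have := my_gauss_integrable_sq hv
  rw [show (fun x : ℝ => x) = id from rfl, memLp_two_iff_integrable_sq measurable_id.aestronglyMeasurable]
  exact my_gauss_integrable_sq hv

lemma my_gauss_integral_sq : ∫ x, x ^ 2 ∂(gaussianReal 0 v) = (v:ℝ) := by
  rw [my_gaussianReal_integral v hv]
  have : (fun x : ℝ => gaussianPDFReal 0 v x * x ^ 2)
      = fun x => (Real.sqrt (2 * π * v))⁻¹ * (x ^ 2 * Real.exp (-(2 * (v:ℝ))⁻¹ * x ^ 2)) := by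
    funext x; rw [my_gaussianPDFReal_eq]; ring
  rw [this, integral_const_mul, my_integral_sq_mul_exp_neg_mul_sq (my_hb hv)]
  have hvR := my_hvR hv
  have h1 : π / (2 * (v:ℝ))⁻¹ = 2 * π * v := by
    field_simp
  rw [h1]
  have h2 : (0:ℝ) < Real.sqrt (2 * π * v) := Real.sqrt_pos.2 (by positivity)
  field_simp

end moments

lemma my_variance_const_add {Ω : Type*} [MeasurableSpace Ω] {μ : Measure Ω}
    [IsProbabilityMeasure μ] (a : ℝ) (f : Ω → ℝ) (hf : Integrable f μ) :
    variance (fun ω => a + f ω) μ = variance f μ := by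
  rw [variance, variance, evariance, evariance]
  congr 1
  apply lintegral_congr
  intro ω
  congr 2
  rw [integral_add (integrable_const a) hf, integral_const, probReal_univ,
    one_smul]
  ring

lemma my_pi_eval_measure {ι : Type*} [Fintype ι] {α : ι → Type*} [∀ i, MeasurableSpace (α i)]
    (μ : ∀ i, Measure (α i)) [∀ i, IsProbabilityMeasure (μ i)] (i : ι) (s : Set (α i)) :
    Measure.pi μ (Function.eval i ⁻¹' s) = μ i s := by
  classical
  rw [← Set.univ_pi_update_univ, Measure.pi_pi,
    Fintype.prod_eq_single i (fun j hj => by rw [Function.update_of_ne hj]; exact measure_univ),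
    Function.update_self]

lemma my_pi_map_eval {ι : Type*} [Fintype ι] {α : ι → Type*} [∀ i, MeasurableSpace (α i)]
    (μ : ∀ i, Measure (α i)) [∀ i, IsProbabilityMeasure (μ i)] (i : ι) :
    (Measure.pi μ).map (fun ω : ∀ j, α j => ω i) = μ i := by
  ext s hs
  rw [Measure.map_apply (measurable_pi_apply i) hs]
  exact my_pi_eval_measure μ i s

lemma my_iIndepFun_eval {ι : Type*} [Fintype ι] {α : ι → Type*} [∀ i, MeasurableSpace (α i)]
    (μ : ∀ i, Measure (α i)) [∀ i, IsProbabilityMeasure (μ i)] :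
    iIndepFun (fun i (ω : ∀ j, α j) => ω i) (Measure.pi μ) := by
  classical
  rw [iIndepFun_iff_measure_inter_preimage_eq_mul]
  intro S sets hsets
  have h1 : (⋂ i ∈ S, (fun ω : ∀ j, α j => ω i) ⁻¹' sets i)
      = Set.pi Set.univ (fun i => if i ∈ S then sets i else Set.univ) := by
    ext ω
    simp only [Set.mem_iInter, Set.mem_preimage, Set.mem_pi, Set.mem_univ, true_implies]
    constructor
    · intro h i
      split_ifs with hi
      · exact h i hi
      · trivial
    · intro h i hi
      have := h i
      rwa [if_pos hi] at this
  rw [h1, Measure.pi_pi]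
  have h2 : ∀ i, μ i (if i ∈ S then sets i else Set.univ)
      = if i ∈ S then μ i (sets i) else 1 := by
    intro i; split_ifs <;> simp
  simp_rw [h2]
  rw [Finset.prod_ite_mem, Finset.univ_inter]
  exact Finset.prod_congr rfl fun i hi => (my_pi_eval_measure μ i (sets i)).symm

lemma my_sum_ite_erase {α M : Type*} [Fintype α] [DecidableEq α] [AddCommMonoid M]
    (i : α) (A : α → M) :
    ∑ y : α, (if y = i then 0 else A y) = ∑ y ∈ Finset.univ.erase i, A y := by
  rw [Finset.sum_ite, Finset.sum_const_zero, zero_add]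
  apply Finset.sum_congr _ (fun _ _ => rfl)
  ext y
  simp [Finset.mem_erase, and_comm]


end Helpers

/-- Fix `x ∈ ℝ^d`, an index `i`, and nonzero reals
`g 1, …, g d'` (the `i`-th column of the projection matrix).  Let all the
remaining matrix entries `G (j, i')` be independent `N(0, 1/d')` Gaussians
(modelled as the coordinates of the product measure `μ` below), and set
`y j = g j * x i + ∑_{i' ≠ i} G (j, i') * x i'`.  Then the estimator
`x̂ = (∑ j, g j * y j) / (∑ j, (g j)²)` satisfies `E[x̂] = x i` and
`Var(x̂) = ‖x − x i • e i‖₂² / (d' · ∑ j, (g j)²)`. -/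
theorem gaussian_projection_estimator_mean_variance
    (d d' : ℕ) (hd : 0 < d) (hd' : 0 < d')
    (x : Fin d → ℝ) (i : Fin d)
    (g : Fin d' → ℝ) (hg : ∀ j, g j ≠ 0)
    (μ : Measure ((Fin d' × Fin d) → ℝ))
    (hμ : μ = Measure.pi fun _ : Fin d' × Fin d => gaussianReal 0 ((d' : ℝ≥0))⁻¹)
    (y : ((Fin d' × Fin d) → ℝ) → Fin d' → ℝ)
    (hy : ∀ ω j, y ω j = g j * x i + ∑ i' ∈ Finset.univ.erase i, ω (j, i') * x i')
    (xhat : ((Fin d' × Fin d) → ℝ) → ℝ)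
    (hxhat : ∀ ω, xhat ω = (∑ j, g j * y ω j) / (∑ j, g j ^ 2)) :
    (∫ ω, xhat ω ∂μ) = x i ∧
    variance xhat μ =
      (∑ i' ∈ Finset.univ.erase i, x i' ^ 2) / ((d' : ℝ) * ∑ j, g j ^ 2) := by
  classical
  subst hμ
  set v : ℝ≥0 := ((d' : ℝ≥0))⁻¹ with hvdef
  have hd'R : (0:ℝ) < (d':ℝ) := by exact_mod_cast hd'
  have hv : v ≠ 0 := inv_ne_zero (by exact_mod_cast hd'.ne')
  have hvR : (v:ℝ) = ((d':ℝ))⁻¹ := by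
    rw [hvdef, NNReal.coe_inv, NNReal.coe_natCast]
  set S : ℝ := ∑ j, g j ^ 2 with hS
  have hSpos : 0 < S := Finset.sum_pos (fun j _ => pow_two_pos_of_ne_zero (hg j))
    ⟨⟨0, hd'⟩, Finset.mem_univ _⟩
  set c : Fin d' × Fin d → ℝ := fun p => if p.2 = i then 0 else g p.1 * x p.2 / S with hc
  -- rewrite xhat as constant plus linear form
  have hxhat' : xhat = fun ω => x i + ∑ p : Fin d' × Fin d, c p * ω p := by
    funext ω
    rw [hxhat]
    have hnum : ∑ j, g j * y ω j
        = S * x i + ∑ p : Fin d' × Fin d, (if p.2 = i then 0 else g p.1 * x p.2) * ω p := by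
      simp_rw [hy, mul_add, Finset.mul_sum]
      rw [Finset.sum_add_distrib, Fintype.sum_prod_type]
      congr 1
      · rw [hS, Finset.sum_mul]
        exact Finset.sum_congr rfl fun j _ => by ring
      · apply Finset.sum_congr rfl
        intro j _
        have h1 : ∀ i' : Fin d,
            (if (j, i').2 = i then (0:ℝ) else g (j, i').1 * x (j, i').2) * ω (j, i')
            = if i' = i then 0 else g j * (ω (j, i') * x i') := by
          intro i'
          dsimp only
          split_ifs <;> ring
        rw [Finset.sum_congr rfl fun i' _ => h1 i', my_sum_ite_erase i _]
    rw [hnum, add_div, mul_div_cancel_left₀ _ hSpos.ne', Finset.sum_div]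
    congr 1
    apply Finset.sum_congr rfl
    intro p _
    rw [hc]
    dsimp only
    split_ifs with h
    · simp
    · ring
  -- basic facts about the coordinates
  set ν : Measure ℝ := gaussianReal 0 v with hν
  set μpi : Measure ((Fin d' × Fin d) → ℝ) := Measure.pi fun _ => ν with hμpi
  have hmap : ∀ p : Fin d' × Fin d, μpi.map (fun ω => ω p) = ν :=
    fun p => my_pi_map_eval (fun _ => ν) p
  have hmemp : ∀ p : Fin d' × Fin d, MemLp (fun ω : (Fin d' × Fin d) → ℝ => ω p) 2 μpi := by
    intro p
    have h2 : MemLp (fun x : ℝ => x) 2 (μpi.map (fun ω => ω p)) := by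
      rw [hmap p]; exact my_gauss_memℒp_two hv
    exact (memLp_map_measure_iff measurable_id.aestronglyMeasurable
      (measurable_pi_apply p).aemeasurable).1 h2
  have hint : ∀ p : Fin d' × Fin d, Integrable (fun ω : (Fin d' × Fin d) → ℝ => ω p) μpi :=
    fun p => (hmemp p).integrable one_le_two
  have hmean : ∀ p : Fin d' × Fin d, ∫ ω, ω p ∂μpi = 0 := by
    intro p
    have := integral_map (μ := μpi) (φ := fun ω => ω p) (f := fun x : ℝ => x)
      (measurable_pi_apply p).aemeasurable
      (by rw [hmap p]; exact measurable_id.aestronglyMeasurable)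
    rw [hmap p] at this
    rw [← this]
    exact my_gauss_integral_id hv
  have hsqmean : ∀ p : Fin d' × Fin d, ∫ ω, (ω p) ^ 2 ∂μpi = (v:ℝ) := by
    intro p
    have := integral_map (μ := μpi) (φ := fun ω => ω p) (f := fun x : ℝ => x ^ 2)
      (measurable_pi_apply p).aemeasurable
      (by rw [hmap p]; exact (measurable_id.pow_const 2).aestronglyMeasurable)
    rw [hmap p] at this
    rw [← this]
    exact my_gauss_integral_sq hv
  have hvarp : ∀ p : Fin d' × Fin d,
      variance (fun ω : (Fin d' × Fin d) → ℝ => ω p) μpi = (v:ℝ) := by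
    intro p
    rw [variance_eq_sub (hmemp p)]
    simp only [Pi.pow_apply]
    rw [hsqmean p, hmean p]
    ring
  have hindep : ∀ p q : Fin d' × Fin d, p ≠ q →
      IndepFun (fun ω : (Fin d' × Fin d) → ℝ => c p * ω p)
        (fun ω : (Fin d' × Fin d) → ℝ => c q * ω q) μpi := by
    intro p q hpq
    exact ((my_iIndepFun_eval (fun _ : Fin d' × Fin d => ν)).indepFun hpq).comp
      (measurable_const_mul (c p)) (measurable_const_mul (c q))
  have hL : Integrable (fun ω : (Fin d' × Fin d) → ℝ => ∑ p : Fin d' × Fin d, c p * ω p) μpi :=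
    integrable_finset_sum _ (fun p _ => (hint p).const_mul (c p))
  constructor
  · rw [hxhat', integral_add (integrable_const _) hL,
      integral_finset_sum _ (fun p _ => (hint p).const_mul (c p))]
    simp only [integral_const_mul, hmean]
    simp [measure_univ]
  · rw [hxhat', my_variance_const_add _ _ hL]
    have hsum : (fun ω : (Fin d' × Fin d) → ℝ => ∑ p : Fin d' × Fin d, c p * ω p)
        = ∑ p : Fin d' × Fin d, (fun ω : (Fin d' × Fin d) → ℝ => c p * ω p) := by
      funext ω; simp
    rw [hsum, IndepFun.variance_sum (fun p _ => (hmemp p).const_mul (c p))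
      (fun p _ q hq hpq => hindep p q hpq)]
    have hterm : ∀ p : Fin d' × Fin d,
        variance (fun ω : (Fin d' × Fin d) → ℝ => c p * ω p) μpi = c p ^ 2 * (v:ℝ) := by
      intro p
      rw [variance_const_mul, hvarp p]
    rw [Finset.sum_congr rfl fun p _ => hterm p, ← Finset.sum_mul]
    have hcsq : ∑ p : Fin d' × Fin d, c p ^ 2 = (∑ i' ∈ Finset.univ.erase i, x i' ^ 2) / S := by
      rw [Fintype.sum_prod_type]
      have hinner : ∀ j : Fin d', ∑ i' : Fin d, c (j, i') ^ 2
          = g j ^ 2 / S ^ 2 * ∑ i' ∈ Finset.univ.erase i, x i' ^ 2 := by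
        intro j
        have h1 : ∀ i' : Fin d, c (j, i') ^ 2
            = if i' = i then 0 else g j ^ 2 / S ^ 2 * x i' ^ 2 := by
          intro i'
          rw [hc]
          dsimp only
          split_ifs
          · simp
          · rw [div_pow, mul_pow]; ring
        rw [Finset.sum_congr rfl fun i' _ => h1 i', my_sum_ite_erase i _, Finset.mul_sum]
      simp_rw [hinner]
      rw [← Finset.sum_mul, ← Finset.sum_div, ← hS]
      rw [sq]
      field_simp
    rw [hcsq, hvR, ← div_eq_mul_inv, div_div, mul_comm S ((d':ℝ))]
end
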